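/- arXiv:1607.02210 — 9 statements merged into one kernel-verified Lean document; each statement's English description precedes it below -/
import Mathlib

section
/- Let K be an infinite field, k ≥ 2, and let P_1, ..., P_m ⊂ R = K[x_1,...,x_k] be the defining prime ideals of an essential subspace arrangement: each P_i is generated by c_i linearly independent linear forms with 1 ≤ c_i ≤ k−1, and P_1 + ··· + P_m = 𝔪, where 𝔪 = ⟨x_1,...,x_k⟩. Then there exist a positive integer n, a list Λ = (ℓ_1,...,ℓ_n) of linear forms in R that generate 𝔪, and an integer a ∈ {1,...,n}, such that the radical of I_a(Λ) equals P_1 ∩ ··· ∩ P_m. -/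
open MvPolynomial

/-- The ideal `I_a(Λ)` generated by all `a`-fold products of the linear forms
`ℓ 0, …, ℓ (n-1)` (products over `a`-element subsets of indices). -/
noncomputable def gscIdeal {K : Type*} [Field K] {k n : ℕ}
    (ℓ : Fin n → MvPolynomial (Fin k) K) (a : ℕ) : Ideal (MvPolynomial (Fin k) K) :=
  Ideal.span { f | ∃ s : Finset (Fin n), s.card = a ∧ f = ∏ i ∈ s, ℓ i }

section Aux

lemma inv_matrix_repr {K : Type*} [Field K] {c : ℕ} {V : Type*} [AddCommGroup V] [Module K V]
    (M : Matrix (Fin c) (Fin c) K) (hM : IsUnit M.det) (v : Fin c → V) (s : Fin c) :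
    v s = ∑ i, M⁻¹ s i • (∑ j, M i j • v j) := by
  have h : M⁻¹ * M = 1 := Matrix.nonsing_inv_mul M hM
  calc v s = ∑ j, (1 : Matrix (Fin c) (Fin c) K) s j • v j := by
        simp [Matrix.one_apply, ite_smul]
    _ = ∑ j, (M⁻¹ * M) s j • v j := by rw [h]
    _ = ∑ i, M⁻¹ s i • (∑ j, M i j • v j) := by
        simp only [Matrix.mul_apply, Finset.sum_smul, Finset.smul_sum, smul_smul]
        rw [Finset.sum_comm]

lemma vandermonde_repr {K : Type*} [Field K] {c : ℕ} {V : Type*} [AddCommGroup V] [Module K V]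
    (v : Fin c → V) (μ : Fin c → K) (hμ : Function.Injective μ) (s : Fin c) :
    v s = ∑ i, (Matrix.vandermonde μ)⁻¹ s i • (∑ j : Fin c, μ i ^ (j : ℕ) • v j) := by
  have hdet : IsUnit (Matrix.vandermonde μ).det := by
    simpa [isUnit_iff_ne_zero] using Matrix.det_vandermonde_ne_zero_iff.mpr hμ
  simpa [Matrix.vandermonde_apply] using inv_matrix_repr (Matrix.vandermonde μ) hdet v s

/-- The linear form `∑ s, x^s • v s` (a "generic" combination of the `v`s). -/
noncomputable def wdef {K : Type*} [Field K] {k c : ℕ} (v : Fin c → MvPolynomial (Fin k) K) (x : K) :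
    MvPolynomial (Fin k) K :=
  ∑ s : Fin c, x ^ (s : ℕ) • v s

lemma smul_sum_mem {K : Type*} [Field K] {k : ℕ} (Q : Ideal (MvPolynomial (Fin k) K))
    {ι : Type*} [Fintype ι] (aa : ι → K) (u : ι → MvPolynomial (Fin k) K)
    (h : ∀ q, u q ∈ Q) : (∑ q, aa q • u q) ∈ Q :=
  Ideal.sum_mem Q fun q _ => by
    rw [MvPolynomial.smul_eq_C_mul]; exact Q.mul_mem_left _ (h q)

lemma wdef_mem {K : Type*} [Field K] {k c : ℕ} (Q : Ideal (MvPolynomial (Fin k) K))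
    (v : Fin c → MvPolynomial (Fin k) K) (hv : ∀ s, v s ∈ Q) (x : K) : wdef v x ∈ Q :=
  smul_sum_mem Q _ _ hv

lemma wdef_homog {K : Type*} [Field K] {k c : ℕ} (v : Fin c → MvPolynomial (Fin k) K)
    (hv : ∀ s, (v s).IsHomogeneous 1) (x : K) : (wdef v x).IsHomogeneous 1 :=
  MvPolynomial.IsHomogeneous.sum _ _ _ fun s _ => by
    rw [MvPolynomial.smul_eq_C_mul]; exact (hv s).C_mul _

lemma mem_of_wdef_mem {K : Type*} [Field K] {k c : ℕ} (v : Fin c → MvPolynomial (Fin k) K)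
    (μ : Fin c → K) (hμ : Function.Injective μ) (Q : Ideal (MvPolynomial (Fin k) K))
    (h : ∀ q, wdef v (μ q) ∈ Q) (s : Fin c) : v s ∈ Q := by
  have hrep : v s = ∑ q, (Matrix.vandermonde μ)⁻¹ s q • wdef v (μ q) := by
    simpa [wdef] using vandermonde_repr v μ hμ s
  rw [hrep]
  exact smul_sum_mem Q _ _ h

end Aux

/-- **Interpolation by generalized star configuration varieties.**
Any essential projective subspace arrangement, given by prime ideals `P i` each
generated by `c i` linearly independent linear forms (`1 ≤ c i ≤ k − 1`) with
`Σ P i = 𝔪`, is the variety of a generalized star configuration: there are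
linear forms `ℓ 1, …, ℓ n` generating `𝔪` and `a ∈ {1, …, n}` with
`√(I_a(Λ)) = P 1 ∩ ⋯ ∩ P m`. -/
theorem subspaceArrangement_eq_gscv (K : Type*) [Field K] [Infinite K]
    (k : ℕ) (hk : 2 ≤ k) (m : ℕ) (hm : 1 ≤ m)
    (P : Fin m → Ideal (MvPolynomial (Fin k) K))
    (c : Fin m → ℕ) (hc : ∀ i, 1 ≤ c i ∧ c i ≤ k - 1)
    (hprime : ∀ i, (P i).IsPrime)
    (hgen : ∀ i, ∃ v : Fin (c i) → MvPolynomial (Fin k) K,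
      (∀ j, (v j).IsHomogeneous 1) ∧ LinearIndependent K v ∧
      P i = Ideal.span (Set.range v))
    (hess : (⨆ i, P i) = Ideal.span (Set.range (X : Fin k → MvPolynomial (Fin k) K))) :
    ∃ (n : ℕ) (ℓ : Fin n → MvPolynomial (Fin k) K) (a : ℕ),
      1 ≤ n ∧ (∀ i, (ℓ i).IsHomogeneous 1) ∧
      Ideal.span (Set.range ℓ)
        = Ideal.span (Set.range (X : Fin k → MvPolynomial (Fin k) K)) ∧
      1 ≤ a ∧ a ≤ n ∧
      (gscIdeal ℓ a).radical = ⨅ i, P i := by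
  classical
  choose v hv hlin hP using hgen
  have hkt : k ≤ m * k := by
    calc k = 1 * k := (one_mul k).symm
    _ ≤ m * k := Nat.mul_le_mul_right k hm
  set t := m * k with htdef
  obtain ⟨lam, hlam⟩ : ∃ lam : Fin t → K, Function.Injective lam :=
    ⟨fun j => Infinite.natEmbedding K j,
      (Infinite.natEmbedding K).injective.comp Fin.val_injective⟩
  have ht1 : 1 ≤ t := by omega
  have htn : t ≤ m * t := by
    calc t = 1 * t := (one_mul t).symm
    _ ≤ m * t := Nat.mul_le_mul_right t hm
  set n := m * t with hndef
  set a := n - t + 1 with hadef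
  set e : Fin m × Fin t ≃ Fin n := finProdFinEquiv with hedef
  set ℓ : Fin n → MvPolynomial (Fin k) K :=
    fun x => wdef (v (e.symm x).1) (lam (e.symm x).2) with hldef
  have hvP : ∀ i s, v i s ∈ P i := fun i s => by
    rw [hP i]; exact Ideal.subset_span ⟨s, rfl⟩
  have hwP : ∀ x : Fin n, ℓ x ∈ P (e.symm x).1 := fun x =>
    wdef_mem _ _ (hvP _) _
  clear hedef
  clear_value ℓ e a n t
  have hGcard : ∀ i : Fin m,
      (Finset.univ.filter fun x : Fin n => (e.symm x).1 = i).card = t := by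
    intro i
    have himg : (Finset.univ.filter fun x : Fin n => (e.symm x).1 = i)
        = Finset.univ.image (fun j : Fin t => e (i, j)) := by
      ext x
      simp only [Finset.mem_filter, Finset.mem_univ, true_and, Finset.mem_image]
      constructor
      · intro h
        exact ⟨(e.symm x).2, by rw [← h, Prod.mk.eta, Equiv.apply_symm_apply]⟩
      · rintro ⟨j, rfl⟩; simp
    rw [himg, Finset.card_image_of_injective _
      (fun j j' h => (Prod.ext_iff.mp (e.injective h)).2),
      Finset.card_univ, Fintype.card_fin]
  have hsub : ∀ i, gscIdeal ℓ a ≤ P i := by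
    intro i
    rw [gscIdeal, Ideal.span_le]
    rintro f ⟨S, hS, rfl⟩
    have hcap : (S ∩ (Finset.univ.filter fun x : Fin n => (e.symm x).1 = i)).Nonempty := by
      rw [← Finset.card_pos]
      have h1 := Finset.card_union_add_card_inter S
        (Finset.univ.filter fun x : Fin n => (e.symm x).1 = i)
      have h2 : (S ∪ (Finset.univ.filter fun x : Fin n => (e.symm x).1 = i)).card ≤ n := by
        calc (S ∪ (Finset.univ.filter fun x : Fin n => (e.symm x).1 = i)).card
            ≤ (Finset.univ : Finset (Fin n)).card :=
          Finset.card_le_card (Finset.subset_univ _)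
        _ = n := by rw [Finset.card_univ, Fintype.card_fin]
      have h3 := hGcard i
      omega
    obtain ⟨x, hx⟩ := hcap
    rw [Finset.mem_inter] at hx
    have hxi : (e.symm x).1 = i := (Finset.mem_filter.mp hx.2).2
    rw [← Finset.mul_prod_erase _ _ hx.1]
    exact Ideal.mul_mem_right _ _ (hxi ▸ hwP x)
  have hmain : ∀ Q : Ideal (MvPolynomial (Fin k) K), Q.IsPrime → gscIdeal ℓ a ≤ Q →
      ∃ i, P i ≤ Q := by
    intro Q hQ hIQ
    set Z := Finset.univ.filter (fun x : Fin n => ℓ x ∈ Q) with hZdef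
    have hZc : t ≤ Z.card := by
      by_contra hlt
      push_neg at hlt
      have hcompl : a ≤ (Finset.univ.filter (fun x : Fin n => ¬ ℓ x ∈ Q)).card := by
        have h1 := Finset.card_filter_add_card_filter_not
          (s := (Finset.univ : Finset (Fin n))) (p := fun x : Fin n => ℓ x ∈ Q)
        have h2 : (Finset.univ : Finset (Fin n)).card = n := by
          rw [Finset.card_univ, Fintype.card_fin]
        rw [← hZdef] at h1
        omega
      obtain ⟨S, hSsub, hScard⟩ := Finset.exists_subset_card_eq hcompl
      have hprod : (∏ x ∈ S, ℓ x) ∈ Q := hIQ (Ideal.subset_span ⟨S, hScard, rfl⟩)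
      obtain ⟨x, hxS, hxQ⟩ := (Ideal.IsPrime.prod_mem_iff (hp := hQ)).mp hprod
      exact (Finset.mem_filter.mp (hSsub hxS)).2 hxQ
    have hfib := Finset.card_eq_sum_card_fiberwise
      (s := Z) (t := (Finset.univ : Finset (Fin m)))
      (f := fun x => (e.symm x).1) (fun x _ => Finset.mem_univ _)
    have hex : ∃ i : Fin m, k ≤ (Z.filter fun x => (e.symm x).1 = i).card := by
      by_contra h
      push_neg at h
      have hle : Z.card ≤ ∑ _i : Fin m, (k - 1) := by
        rw [hfib]
        refine Finset.sum_le_sum fun i _ => ?_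
        show (Z.filter fun x => (e.symm x).1 = i).card ≤ k - 1
        have := h i
        omega
      rw [Finset.sum_const, Finset.card_univ, Fintype.card_fin, smul_eq_mul] at hle
      have hmk : m * (k - 1) + m = m * k := by
        have h4 := Nat.mul_add m (k - 1) 1
        rw [Nat.mul_one] at h4
        rw [show k - 1 + 1 = k from by omega] at h4
        omega
      omega
    obtain ⟨i, hik⟩ := hex
    refine ⟨i, ?_⟩
    have hci : c i ≤ (Z.filter fun x => (e.symm x).1 = i).card := by
      have := hc i; omega
    obtain ⟨S, hSsub, hScard⟩ := Finset.exists_subset_card_eq hci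
    set φ := S.orderIsoOfFin hScard with hφ
    set σ : Fin (c i) → Fin t := fun q => (e.symm (φ q : Fin n)).2 with hσ
    have hσfst : ∀ q, (e.symm (φ q : Fin n)).1 = i := fun q =>
      (Finset.mem_filter.mp (hSsub (φ q).2)).2
    have hinj : Function.Injective (lam ∘ σ) := by
      intro q q' hqq
      have h2 : σ q = σ q' := hlam hqq
      have h3 : e.symm (φ q : Fin n) = e.symm (φ q' : Fin n) :=
        Prod.ext (by rw [hσfst q, hσfst q']) h2
      exact φ.injective (Subtype.ext (e.symm.injective h3))
    rw [hP i, Ideal.span_le]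
    rintro _ ⟨s, rfl⟩
    refine mem_of_wdef_mem (v i) (lam ∘ σ) hinj Q ?_ s
    intro q
    have hxZ : (φ q : Fin n) ∈ Z := (Finset.mem_filter.mp (hSsub (φ q).2)).1
    have hxQ : ℓ (φ q : Fin n) ∈ Q := (Finset.mem_filter.mp hxZ).2
    have hrw : wdef (v ((e.symm (φ q : Fin n)).1)) (lam ((e.symm (φ q : Fin n)).2))
        = wdef (v i) (lam ((e.symm (φ q : Fin n)).2)) :=
      congrArg (fun j : Fin m => wdef (v j) (lam ((e.symm (φ q : Fin n)).2))) (hσfst q)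
    simp only [hldef] at hxQ
    rw [hrw] at hxQ
    show wdef (v i) (lam ((e.symm (φ q : Fin n)).2)) ∈ Q
    exact hxQ
  have hn1 : 1 ≤ n := le_trans ht1 htn
  refine ⟨n, ℓ, a, hn1, ?_, ?_, by omega, by omega, ?_⟩
  · intro x
    rw [hldef]
    exact wdef_homog _ (hv _) _
  · apply le_antisymm
    · rw [Ideal.span_le]
      rintro _ ⟨x, rfl⟩
      rw [← hess]
      exact le_iSup P (e.symm x).1 (hwP x)
    · rw [← hess]
      refine iSup_le fun i => ?_
      rw [hP i, Ideal.span_le]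
      rintro _ ⟨s, rfl⟩
      have hct : c i ≤ t := by have := hc i; omega
      refine mem_of_wdef_mem (v i) (lam ∘ Fin.castLE hct)
        (hlam.comp (Fin.castLE_injective hct)) _ ?_ s
      intro q
      refine Ideal.subset_span ⟨e (i, Fin.castLE hct q), ?_⟩
      simp only [hldef]
      rw [Equiv.symm_apply_apply]
      rfl
  · apply le_antisymm
    · refine le_iInf fun i => ?_
      calc (gscIdeal ℓ a).radical ≤ (P i).radical := Ideal.radical_mono (hsub i)
      _ = P i := (hprime i).radical
    · rw [Ideal.radical_eq_sInf]
      refine le_sInf ?_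
      rintro Q ⟨hIQ, hQp⟩
      obtain ⟨i, hi⟩ := hmain Q hQp hIQ
      exact le_trans (iInf_le P i) hi
end

section
/- Let K be a field, k ≥ 2, and let P_1,...,P_m ⊂ R = K[x_1,...,x_k] be prime ideals, where P_i is generated by c_i linearly independent linear forms (1 ≤ c_i ≤ k−1) and P_1 + ··· + P_m = 𝔪. Set ℵ = 1 + Σ_{i=1}^m (c_i − 1). For each i, let Λ_i be a set of ℵ linear forms contained in P_i such that every c_i elements of Λ_i generate P_i. Let Λ = Λ_1 ∪ ··· ∪ Λ_m (a set of n distinct linear forms, which generate 𝔪) and let a = n − ℵ + 1. Then the radical of I_a(Λ) equals P_1 ∩ ··· ∩ P_m. -/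
open MvPolynomial

/-- The ideal `I_a(Λ)` for a finite set `Λ` of (distinct) linear forms: the ideal
generated by all products of `a` distinct elements of `Λ`. -/
noncomputable def gscIdealFinset {K : Type*} [Field K] {k : ℕ}
    (Λ : Finset (MvPolynomial (Fin k) K)) (a : ℕ) : Ideal (MvPolynomial (Fin k) K) :=
  Ideal.span { f | ∃ s : Finset (MvPolynomial (Fin k) K), s ⊆ Λ ∧ s.card = a ∧ f = ∏ x ∈ s, x }

open scoped Classical in
/-- **The explicit interpolation construction.** Given an essential subspace arrangement
`P 1, …, P m` (each `P i` generated by `c i` linearly independent linear forms,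
`1 ≤ c i ≤ k−1`, `Σ P i = 𝔪`), set `ℵ = 1 + Σ (c i − 1)`.  If `Λ i` is a set of `ℵ`
linear forms inside `P i` any `c i` of which generate `P i`, and `Λ = ⋃ Λ i` has `n`
elements, then with `a = n − ℵ + 1` the forms of `Λ` generate `𝔪` and
`√(I_a(Λ)) = P 1 ∩ ⋯ ∩ P m`. -/
theorem gscv_interpolation_construction (K : Type*) [Field K]
    (k : ℕ) (hk : 2 ≤ k) (m : ℕ) (hm : 1 ≤ m)
    (P : Fin m → Ideal (MvPolynomial (Fin k) K))
    (c : Fin m → ℕ) (hc : ∀ i, 1 ≤ c i ∧ c i ≤ k - 1)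
    (hprime : ∀ i, (P i).IsPrime)
    (hgen : ∀ i, ∃ v : Fin (c i) → MvPolynomial (Fin k) K,
      (∀ j, (v j).IsHomogeneous 1) ∧ LinearIndependent K v ∧
      P i = Ideal.span (Set.range v))
    (hess : (⨆ i, P i) = Ideal.span (Set.range (X : Fin k → MvPolynomial (Fin k) K)))
    (Λi : Fin m → Finset (MvPolynomial (Fin k) K))
    (hΛcard : ∀ i, (Λi i).card = 1 + ∑ j, (c j - 1))
    (hΛmem : ∀ i, ∀ f ∈ Λi i, f.IsHomogeneous 1 ∧ f ∈ P i)
    (hΛgen : ∀ i, ∀ s ⊆ Λi i, s.card = c i → Ideal.span (s : Set (MvPolynomial (Fin k) K)) = P i) :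
    Ideal.span ((Finset.univ.biUnion Λi : Finset (MvPolynomial (Fin k) K)) :
        Set (MvPolynomial (Fin k) K))
      = Ideal.span (Set.range (X : Fin k → MvPolynomial (Fin k) K)) ∧
    (gscIdealFinset (Finset.univ.biUnion Λi)
        ((Finset.univ.biUnion Λi).card - (1 + ∑ j, (c j - 1)) + 1)).radical
      = ⨅ i, P i := by
  classical
  set Λ : Finset (MvPolynomial (Fin k) K) := Finset.univ.biUnion Λi with hΛ
  set ℵ : ℕ := 1 + ∑ j, (c j - 1) with hℵ
  set n : ℕ := Λ.card with hn
  set a : ℕ := n - ℵ + 1 with ha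
  -- Λi i ⊆ Λ
  have hsubΛ : ∀ i, Λi i ⊆ Λ := fun i =>
    Finset.subset_biUnion_of_mem Λi (Finset.mem_univ i)
  -- ℵ ≥ c i
  have hℵc : ∀ i, c i ≤ ℵ := by
    intro i
    have h1 : c i - 1 ≤ ∑ j, (c j - 1) :=
      Finset.single_le_sum (f := fun j => c j - 1) (fun _ _ => Nat.zero_le _)
        (Finset.mem_univ i)
    have := (hc i).1
    omega
  -- ℵ ≤ n
  have hℵn : ℵ ≤ n := by
    obtain ⟨i0⟩ : Nonempty (Fin m) := ⟨⟨0, hm⟩⟩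
    calc ℵ = (Λi i0).card := (hΛcard i0).symm
    _ ≤ n := Finset.card_le_card (hsubΛ i0)
  -- for each i there is a c i subset of Λi i, hence P i ≤ span of any superset of Λi i
  have hPle : ∀ i (Q : Ideal (MvPolynomial (Fin k) K)), (∀ x ∈ Λi i, x ∈ Q) → P i ≤ Q := by
    intro i Q hQ
    obtain ⟨s, hs, hscard⟩ := Finset.exists_subset_card_eq ((hΛcard i ▸ hℵc i :
      c i ≤ (Λi i).card))
    rw [← hΛgen i s hs hscard, Ideal.span_le]
    exact fun x hx => hQ x (hs hx)
  constructor
  · -- first conjunct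
    rw [← hess]
    apply le_antisymm
    · rw [Ideal.span_le]
      intro f hf
      obtain ⟨i, _, hfi⟩ := Finset.mem_biUnion.mp hf
      exact (Ideal.mem_iSup_of_mem i) ((hΛmem i f hfi).2)
    · apply iSup_le
      intro i
      exact hPle i _ (fun x hx => Ideal.subset_span (hsubΛ i hx))
  · -- second conjunct
    apply le_antisymm
    · -- radical ≤ ⨅ P i : since I_a ≤ P i for each i
      rw [le_iInf_iff]
      intro i
      rw [← (hprime i).radical]
      apply Ideal.radical_mono
      rw [gscIdealFinset, Ideal.span_le]
      rintro f ⟨s, hsΛ, hscard, rfl⟩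
      -- s meets Λi i
      have hmeet : ∃ x ∈ s, x ∈ Λi i := by
        by_contra hno
        push_neg at hno
        have hsub : s ⊆ Λ \ Λi i := fun x hx =>
          Finset.mem_sdiff.mpr ⟨hsΛ hx, hno x hx⟩
        have h1 : s.card ≤ (Λ \ Λi i).card := Finset.card_le_card hsub
        rw [Finset.card_sdiff_of_subset (hsubΛ i), hΛcard i] at h1
        omega
      obtain ⟨x, hxs, hxi⟩ := hmeet
      rw [← Finset.mul_prod_erase s _ hxs]
      exact Ideal.mul_mem_right _ _ ((hΛmem i x hxi).2)
    · -- ⨅ P i ≤ radical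
      rw [Ideal.radical_eq_sInf]
      apply le_sInf
      rintro Q ⟨hIQ, hQprime⟩
      -- Q contains at least ℵ elements of Λ
      set T : Finset (MvPolynomial (Fin k) K) := Λ.filter (· ∈ Q) with hT
      have hTcard : ℵ ≤ T.card := by
        by_contra hlt
        push_neg at hlt
        have hFc : a ≤ (Λ.filter (· ∉ Q)).card := by
          have hlt' : (Λ.filter (· ∈ Q)).card < ℵ := hlt
          have := Finset.card_filter_add_card_filter_not
            (s := Λ) (p := (· ∈ Q))
          omega
        obtain ⟨s, hs, hscard⟩ := Finset.exists_subset_card_eq hFc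
        have hprod : (∏ x ∈ s, x) ∈ Q := by
          apply hIQ
          apply Ideal.subset_span
          exact ⟨s, hs.trans (Finset.filter_subset _ _), hscard, rfl⟩
        have : ∃ p ∈ s, p ∈ Q := by
          have := (hQprime.prod_mem_iff_exists_mem s).mp (by simpa using hprod)
          simpa using this
        obtain ⟨p, hps, hpQ⟩ := this
        exact (Finset.mem_filter.mp (hs hps)).2 hpQ
      -- pigeonhole: some i has |T ∩ Λi i| ≥ c i
      have hex : ∃ i, c i ≤ (T ∩ Λi i).card := by
        by_contra hno
        push_neg at hno
        have hcover : T ⊆ Finset.univ.biUnion (fun i => T ∩ Λi i) := by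
          intro x hx
          have hxΛ : x ∈ Λ := (Finset.filter_subset _ _) hx
          obtain ⟨i, _, hxi⟩ := Finset.mem_biUnion.mp hxΛ
          exact Finset.mem_biUnion.mpr ⟨i, Finset.mem_univ i,
            Finset.mem_inter.mpr ⟨hx, hxi⟩⟩
        have h1 : T.card ≤ ∑ i, (T ∩ Λi i).card :=
          (Finset.card_le_card hcover).trans (Finset.card_biUnion_le)
        have h2 : ∑ i, (T ∩ Λi i).card ≤ ∑ i, (c i - 1) :=
          Finset.sum_le_sum (fun i _ => by have := hno i; omega)
        omega
      obtain ⟨i, hi⟩ := hex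
      obtain ⟨s, hs, hscard⟩ := Finset.exists_subset_card_eq hi
      have hPQ : P i ≤ Q := by
        rw [← hΛgen i s (hs.trans (Finset.inter_subset_right)) hscard, Ideal.span_le]
        intro x hx
        exact (Finset.mem_filter.mp (Finset.inter_subset_left (hs hx))).2
      exact le_trans (iInf_le P i) hPQ
end

section
/- Let K be a field, k ≥ 2, and let P_1,...,P_m ⊂ R = K[x_1,...,x_k] be prime ideals, where P_i is generated by c_i linearly independent linear forms (1 ≤ c_i ≤ k−1) and P_1 + ··· + P_m = 𝔪. Set ℵ = 1 + Σ_{i=1}^m (c_i − 1); for each i let Λ_i be a set of ℵ linear forms contained in P_i such that every c_i elements of Λ_i generate P_i; let Λ = Λ_1 ∪ ··· ∪ Λ_m, enumerated as ℓ_1,...,ℓ_n, and let a = n − ℵ + 1. Let φ : K^k → K^n be the (injective) linear map v ↦ (ℓ_1(v),...,ℓ_n(v)), and for each i let V_i ⊆ K^k be the common zero set of the forms in Λ_i. Then: (1) for each i, the support of the subspace φ(V_i) ⊆ K^n has size at most a − 1; and (2) every subspace D of the code C = φ(K^k) whose support has size at most a − 1 is contained in φ(V_{i_0}) for some i_0 ∈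 {1,...,m}. In other words, φ(V_1),...,φ(V_m) are the maximal subcodes of C of support size ≤ a − 1. -/
open MvPolynomial

/-- The evaluation ("generating matrix") map of the linear code associated with linear
forms `ℓ 1, …, ℓ n`: `v ↦ (ℓ 1(v), …, ℓ n(v))`. -/
noncomputable def codeMap {K : Type*} [Field K] {k n : ℕ}
    (ℓ : Fin n → MvPolynomial (Fin k) K) : (Fin k → K) → (Fin n → K) :=
  fun v j => MvPolynomial.eval v (ℓ j)

/-- The support of a set of vectors `D ⊆ K^n`: the set of coordinates at which some
element of `D` is nonzero. -/
def codeSupport {K : Type*} [Field K] {n : ℕ} (D : Set (Fin n → K)) : Set (Fin n) :=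
  { j | ∃ y ∈ D, y j ≠ 0 }

open scoped Classical in
/-- **Maximal subcodes of small support.** In the interpolation construction
(`Λ = Λ 1 ∪ ⋯ ∪ Λ m` enumerated as `ℓ 1, …, ℓ n`, `ℵ = 1 + Σ (c i − 1)`,
`a = n − ℵ + 1`, `φ(v) = (ℓ 1(v), …, ℓ n(v))`, `V i` the common zero set of `Λ i`):
(1) each `φ(V i)` has support of size at most `a − 1`, and
(2) every subspace `D` of the code `C = φ(K^k)` with support of size at most `a − 1`
is contained in some `φ(V i₀)`.  Thus the `φ(V i)` are the maximal subcodes of `C` of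
support size `≤ a − 1`. -/
theorem maximal_subcodes_of_small_support (K : Type*) [Field K]
    (k : ℕ) (hk : 2 ≤ k) (m : ℕ) (hm : 1 ≤ m)
    (P : Fin m → Ideal (MvPolynomial (Fin k) K))
    (c : Fin m → ℕ) (hc : ∀ i, 1 ≤ c i ∧ c i ≤ k - 1)
    (hprime : ∀ i, (P i).IsPrime)
    (hgen : ∀ i, ∃ v : Fin (c i) → MvPolynomial (Fin k) K,
      (∀ j, (v j).IsHomogeneous 1) ∧ LinearIndependent K v ∧
      P i = Ideal.span (Set.range v))
    (hess : (⨆ i, P i) = Ideal.span (Set.range (X : Fin k → MvPolynomial (Fin k) K)))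
    (Λi : Fin m → Finset (MvPolynomial (Fin k) K))
    (hΛcard : ∀ i, (Λi i).card = 1 + ∑ j, (c j - 1))
    (hΛmem : ∀ i, ∀ f ∈ Λi i, f.IsHomogeneous 1 ∧ f ∈ P i)
    (hΛgen : ∀ i, ∀ s ⊆ Λi i, s.card = c i →
      Ideal.span (s : Set (MvPolynomial (Fin k) K)) = P i)
    (n : ℕ) (ℓ : Fin n → MvPolynomial (Fin k) K)
    (hinj : Function.Injective ℓ)
    (hrange : Set.range ℓ
      = ((Finset.univ.biUnion Λi : Finset (MvPolynomial (Fin k) K)) :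
          Set (MvPolynomial (Fin k) K)))
    (a : ℕ) (ha : a = n - (1 + ∑ j, (c j - 1)) + 1) :
    (∀ i : Fin m,
      (codeSupport (codeMap ℓ ''
        { v : Fin k → K | ∀ f ∈ Λi i, MvPolynomial.eval v f = 0 })).ncard ≤ a - 1) ∧
    (∀ D : Submodule K (Fin n → K), (D : Set (Fin n → K)) ⊆ Set.range (codeMap ℓ) →
      (codeSupport (D : Set (Fin n → K))).ncard ≤ a - 1 →
      ∃ i₀ : Fin m, (D : Set (Fin n → K)) ⊆
        codeMap ℓ '' { v : Fin k → K | ∀ f ∈ Λi i₀, MvPolynomial.eval v f = 0 }) := by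
  classical
  set ℵ := 1 + ∑ j, (c j - 1) with hℵ
  -- counting: the set of coordinates with form in `Λi i` has ncard ℵ
  have hA : ∀ i : Fin m, ({j : Fin n | ℓ j ∈ Λi i}).ncard = ℵ := by
    intro i
    have himg : ℓ '' {j : Fin n | ℓ j ∈ Λi i} = (Λi i : Set (MvPolynomial (Fin k) K)) := by
      apply Set.Subset.antisymm
      · rintro f ⟨j, hj, rfl⟩; exact hj
      · intro f hf
        have : f ∈ Set.range ℓ := by
          rw [hrange]
          simpa using ⟨i, hf⟩
        obtain ⟨j, rfl⟩ := this
        exact ⟨j, hf, rfl⟩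
    calc ({j : Fin n | ℓ j ∈ Λi i}).ncard
        = (ℓ '' {j : Fin n | ℓ j ∈ Λi i}).ncard :=
          (Set.ncard_image_of_injective _ hinj).symm
      _ = ((Λi i : Set (MvPolynomial (Fin k) K))).ncard := by rw [himg]
      _ = ℵ := by rw [Set.ncard_coe_finset, hΛcard]
  have hℵn : ℵ ≤ n := by
    have i0 : Fin m := ⟨0, hm⟩
    have := Set.ncard_le_ncard (Set.subset_univ {j : Fin n | ℓ j ∈ Λi i0})
      (Set.finite_univ)
    rwa [hA i0, Set.ncard_univ, Nat.card_eq_fintype_card, Fintype.card_fin] at this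
  have ha1 : a - 1 = n - ℵ := by omega
  constructor
  · -- Part 1
    intro i
    have hsub : codeSupport (codeMap ℓ ''
        { v : Fin k → K | ∀ f ∈ Λi i, MvPolynomial.eval v f = 0 })
        ⊆ {j : Fin n | ℓ j ∈ Λi i}ᶜ := by
      rintro j ⟨y, ⟨v, hv, rfl⟩, hyj⟩
      intro hmem
      exact hyj (hv _ hmem)
    have hle := Set.ncard_le_ncard hsub ((Set.finite_univ (α := Fin n)).subset
      (Set.subset_univ _))
    have hcompl := Set.ncard_add_ncard_compl {j : Fin n | ℓ j ∈ Λi i}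
      ((Set.finite_univ (α := Fin n)).subset (Set.subset_univ _))
      ((Set.finite_univ (α := Fin n)).subset (Set.subset_univ _))
    rw [hA i] at hcompl
    have : ({j : Fin n | ℓ j ∈ Λi i}ᶜ).ncard = n - ℵ := by
      have : Nat.card (Fin n) = n := Nat.card_eq_fintype_card.trans (Fintype.card_fin n)
      omega
    omega
  · -- Part 2
    intro D hD hcard
    -- Z : coordinates where D vanishes
    set Z : Finset (Fin n) :=
      Finset.univ.filter (fun j => j ∉ codeSupport (D : Set (Fin n → K))) with hZ
    have hZzero : ∀ j ∈ Z, ∀ y ∈ D, y j = 0 := by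
      intro j hj y hy
      simp only [hZ, Finset.mem_filter] at hj
      by_contra hne
      exact hj.2 ⟨y, hy, hne⟩
    have hZcard : ℵ ≤ Z.card := by
      have hfin : (codeSupport (D : Set (Fin n → K))).Finite :=
        (Set.finite_univ (α := Fin n)).subset (Set.subset_univ _)
      have hcompl := Set.ncard_add_ncard_compl (codeSupport (D : Set (Fin n → K)))
        hfin ((Set.finite_univ (α := Fin n)).subset (Set.subset_univ _))
      have hcuniv : Nat.card (Fin n) = n :=
        Nat.card_eq_fintype_card.trans (Fintype.card_fin n)
      have hZeq : (Z : Set (Fin n)) = (codeSupport (D : Set (Fin n → K)))ᶜ := by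
        ext j; simp [hZ]
      have : Z.card = ((codeSupport (D : Set (Fin n → K)))ᶜ).ncard := by
        rw [← hZeq, Set.ncard_coe_finset]
      omega
    -- choose for each j a part containing ℓ j
    have hchoice : ∀ j : Fin n, ∃ i : Fin m, ℓ j ∈ Λi i := by
      intro j
      have : ℓ j ∈ Set.range ℓ := ⟨j, rfl⟩
      rw [hrange] at this
      simpa using this
    choose ψ hψ using hchoice
    -- pigeonhole: some fiber has at least c i₀ elements
    have hpigeon : ∃ i₀ : Fin m, c i₀ ≤ (Z.filter (fun j => ψ j = i₀)).card := by
      by_contra hcon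
      push_neg at hcon
      have hfib : Z.card = ∑ i : Fin m, (Z.filter (fun j => ψ j = i)).card :=
        Finset.card_eq_sum_card_fiberwise (fun j _ => Finset.mem_univ (ψ j))
      have hle : ∑ i : Fin m, (Z.filter (fun j => ψ j = i)).card
          ≤ ∑ i : Fin m, (c i - 1) := by
        apply Finset.sum_le_sum
        intro i _
        have := hcon i
        omega
      omega
    obtain ⟨i₀, hi₀⟩ := hpigeon
    refine ⟨i₀, ?_⟩
    -- a generating subset of Λi i₀ of size c i₀ on which D vanishes
    have himgcard : c i₀ ≤ ((Z.filter (fun j => ψ j = i₀)).image ℓ).card := by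
      rwa [Finset.card_image_of_injective _ hinj]
    obtain ⟨s, hs_sub, hs_card⟩ := Finset.exists_subset_card_eq himgcard
    have hsΛ : s ⊆ Λi i₀ := by
      intro f hf
      obtain ⟨j, hj, rfl⟩ := Finset.mem_image.mp (hs_sub hf)
      have := (Finset.mem_filter.mp hj).2
      rw [← this]; exact hψ j
    have hspan : Ideal.span (s : Set (MvPolynomial (Fin k) K)) = P i₀ :=
      hΛgen i₀ s hsΛ hs_card
    intro y hy
    obtain ⟨v, hv⟩ := hD hy
    refine ⟨v, ?_, hv⟩
    intro f hf
    -- f ∈ P i₀ = span s ⊆ ker (eval v)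
    have hfP : f ∈ Ideal.span (s : Set (MvPolynomial (Fin k) K)) := by
      rw [hspan]; exact (hΛmem i₀ f hf).2
    have hker : Ideal.span (s : Set (MvPolynomial (Fin k) K))
        ≤ RingHom.ker (MvPolynomial.eval v) := by
      rw [Ideal.span_le]
      intro g hg
      obtain ⟨j, hj, rfl⟩ := Finset.mem_image.mp (hs_sub hg)
      have hj' : j ∈ Z := (Finset.mem_filter.mp hj).1
      have : MvPolynomial.eval v (ℓ j) = y j := by rw [← hv]; rfl
      simpa [RingHom.mem_ker, this] using hZzero j hj' y hy
    exact hker hfP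
end

section
/- Let K be an infinite field and let X = {P_1,...,P_m} ⊂ ℙ² be a set of m distinct points, not all collinear. Let Λ_X be the list of linear forms in K[x,y,z] defining the lines of the multi-arrangement 𝒜_X, where the defining form of a line containing exactly s points of X is repeated s − 1 times; let n be the total number of forms in Λ_X (counted with multiplicity). Then the radical of I_{n−m+2}(Λ_X) equals I(X) = I(P_1) ∩ ··· ∩ I(P_m), the vanishing ideal of X. -/
open MvPolynomial
open scoped LinearAlgebra.Projectivization
open scoped Classical

noncomputable section GscAux

variable {K : Type*} [Field K]

/-- The dot-product linear functional. -/
def gscDot (v : Fin 3 → K) : (Fin 3 → K) →ₗ[K] K :=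
  ∑ i, v i • LinearMap.proj i

lemma gscDot_apply (v w : Fin 3 → K) : gscDot v w = ∑ i, v i * w i := by
  simp [gscDot]

lemma gscDot_comm (v w : Fin 3 → K) : gscDot v w = gscDot w v := by
  simp [gscDot_apply, mul_comm]

/-- The linear form with coefficient vector `c`. -/
def gscLin (c : Fin 3 → K) : MvPolynomial (Fin 3) K :=
  ∑ i, C (c i) * X i

lemma gscLin_add (c d : Fin 3 → K) : gscLin (c + d) = gscLin c + gscLin d := by
  simp [gscLin, add_mul, Finset.sum_add_distrib]

lemma gscLin_smul (a : K) (c : Fin 3 → K) : gscLin (a • c) = C a * gscLin c := by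
  simp [gscLin, Finset.mul_sum, mul_assoc]

lemma gscLin_zero : gscLin (0 : Fin 3 → K) = 0 := by simp [gscLin]

lemma gscLin_isHomogeneous (c : Fin 3 → K) : (gscLin c).IsHomogeneous 1 := by
  apply IsHomogeneous.sum
  intro i _
  simpa using (isHomogeneous_C (Fin 3) (c i)).mul (isHomogeneous_X K i)

lemma eval_gscLin (w c : Fin 3 → K) : eval w (gscLin c) = gscDot c w := by
  simp [gscLin, gscDot_apply]

/-- coefficient vector of a polynomial -/
def gscCvec (f : MvPolynomial (Fin 3) K) : Fin 3 → K := fun i => coeff (Finsupp.single i 1) f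

lemma finsupp_weight_one_eq {d : Fin 3 →₀ ℕ} (h : (Finsupp.weight 1) d = 1) :
    ∃ i, d = Finsupp.single i 1 := by
  have hd : ∑ i, d i = 1 := by
    rw [← h]
    rw [Finsupp.weight_apply, Finsupp.sum_fintype]
    · simp
    · simp
  have h1 : ∃ i, d i ≠ 0 := by
    by_contra hc
    push_neg at hc
    simp [hc] at hd
  obtain ⟨i, hi⟩ := h1
  refine ⟨i, ?_⟩
  have hdi : d i = 1 := by
    have : d i ≤ ∑ j, d j := Finset.single_le_sum (fun j _ => Nat.zero_le _) (Finset.mem_univ i)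
    omega
  ext j
  rcases eq_or_ne j i with rfl | hji
  · simp [hdi]
  · have : ∑ j ∈ {i}ᶜ, d j = 0 := by
      have := Finset.sum_compl_add_sum ({i} : Finset (Fin 3)) d
      simp only [Finset.sum_singleton] at this
      omega
    have hz := Finset.sum_eq_zero_iff.mp this j (by simp [hji])
    simp [Finsupp.single_apply, (Ne.symm hji), hz]

lemma hom1_eq_gscLin {f : MvPolynomial (Fin 3) K} (hf : f.IsHomogeneous 1) :
    f = gscLin (gscCvec f) := by
  apply MvPolynomial.ext
  intro d
  have hR : coeff d (gscLin (gscCvec f)) = ∑ i, gscCvec f i * coeff d (X i : MvPolynomial (Fin 3) K) := by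
    simp [gscLin, MvPolynomial.coeff_sum, coeff_C_mul]
  by_cases hd : ∃ i, d = Finsupp.single i 1
  · obtain ⟨i, rfl⟩ := hd
    rw [hR]
    rw [Finset.sum_eq_single i]
    · simp [coeff_X', gscCvec]
    · intro j _ hji
      have : ¬ (Finsupp.single j 1 = Finsupp.single i 1) := by
        simp [Finsupp.single_left_inj (one_ne_zero)]
        exact hji
      rw [coeff_X', if_neg, mul_zero]
      intro hc
      exact this (by simpa using hc)
    · simp
  · have hL : coeff d f = 0 := by
      by_contra hc
      exact hd (finsupp_weight_one_eq (hf hc))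
    rw [hL, hR]
    symm
    apply Finset.sum_eq_zero
    intro i _
    have : ¬ ((Finsupp.single i 1 : Fin 3 →₀ ℕ) = d) := by
      intro h; exact hd ⟨i, h.symm⟩
    simp [coeff_X', this]

lemma gscCvec_ne_zero {f : MvPolynomial (Fin 3) K} (hf : f.IsHomogeneous 1) (h0 : f ≠ 0) :
    gscCvec f ≠ 0 := by
  intro hc
  apply h0
  rw [hom1_eq_gscLin hf, hc, gscLin_zero]

lemma gscDot_ne_zero {v : Fin 3 → K} (hv : v ≠ 0) : gscDot v ≠ 0 := by
  obtain ⟨i, hi⟩ := Function.ne_iff.mp hv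
  intro hc
  apply hi
  have := congrFun (congrArg DFunLike.coe hc) (Pi.single i 1)
  rw [gscDot_apply] at this
  simpa [Pi.single_apply, mul_ite, Finset.sum_ite_eq'] using this

lemma finrank_ker_gscDot {v : Fin 3 → K} (hv : v ≠ 0) :
    Module.finrank K (LinearMap.ker (gscDot v)) = 2 := by
  have hr : LinearMap.range (gscDot v) = ⊤ := by
    obtain ⟨i, hi⟩ := Function.ne_iff.mp hv
    apply LinearMap.range_eq_top_of_surjective
    intro a
    have hi' : v i ≠ 0 := by simpa using hi
    refine ⟨(a / v i) • (Pi.single i (1:K) : Fin 3 → K), ?_⟩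
    rw [map_smul, gscDot_apply]
    have : ∑ j, v j * (Pi.single i (1:K) : Fin 3 → K) j = v i := by
      simp [Pi.single_apply, mul_ite, Finset.sum_ite_eq']
    rw [this]
    rw [smul_eq_mul]
    field_simp
  have h3 : Module.finrank K (Fin 3 → K) = 3 := Module.finrank_fin_fun K
  have := LinearMap.finrank_range_add_finrank_ker (gscDot v)
  rw [hr, h3] at this
  simp only [finrank_top] at this
  rw [Module.finrank_self] at this
  omega

lemma two_le_finrank_ker_gscDot (v : Fin 3 → K) :
    2 ≤ Module.finrank K (LinearMap.ker (gscDot v)) := by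
  by_cases hv : v = 0
  · subst hv
    have : LinearMap.ker (gscDot (0 : Fin 3 → K)) = ⊤ := by
      ext w; simp [LinearMap.mem_ker, gscDot_apply]
    rw [this, finrank_top, Module.finrank_fin_fun]
    omega
  · rw [finrank_ker_gscDot hv]

lemma exists_ne_zero_mem_inf {W W' : Submodule K (Fin 3 → K)}
    (h2 : 2 ≤ Module.finrank K W) (h2' : 2 ≤ Module.finrank K W') :
    ∃ x, x ∈ W ⊓ W' ∧ x ≠ 0 := by
  have hfin : FiniteDimensional K (Fin 3 → K) := by infer_instance
  have hsup : Module.finrank K ↥(W ⊔ W') ≤ 3 := by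
    have := Submodule.finrank_le (W ⊔ W')
    rwa [Module.finrank_fin_fun] at this
  have heq := Submodule.finrank_sup_add_finrank_inf_eq W W'
  have hpos : 0 < Module.finrank K ↥(W ⊓ W') := by omega
  have hne : W ⊓ W' ≠ ⊥ := by
    intro hc
    rw [hc, finrank_bot] at hpos
    omega
  obtain ⟨x, hx, hx0⟩ := Submodule.exists_mem_ne_zero_of_ne_bot hne
  exact ⟨x, hx, hx0⟩

end GscAux
section GscAuxB

variable {K : Type*} [Field K]

lemma gsc_range_pair (v w : Fin 3 → K) : Set.range ![v, w] = {v, w} := by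
  ext x
  constructor
  · rintro ⟨i, rfl⟩
    fin_cases i <;> simp
  · rintro (rfl | rfl)
    · exact ⟨0, rfl⟩
    · exact ⟨1, rfl⟩

lemma gsc_li_pair {v w : Fin 3 → K} (hv : v ≠ 0) (hw : w ∉ Submodule.span K {v}) :
    LinearIndependent K ![v, w] := by
  rw [LinearIndependent.pair_iff' hv]
  intro a hc
  exact hw (hc ▸ Submodule.smul_mem _ a (Submodule.mem_span_singleton_self v))

lemma gsc_finrank_span_li {v w : Fin 3 → K} (h : LinearIndependent K ![v, w]) :
    Module.finrank K (Submodule.span K ({v, w} : Set (Fin 3 → K))) = 2 := by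
  have h2 := finrank_span_eq_card (R := K) h
  rw [gsc_range_pair] at h2
  rw [h2]
  simp

lemma gsc_finrank_span_pair {v w : Fin 3 → K} (hv : v ≠ 0) (hw : w ∉ Submodule.span K {v}) :
    Module.finrank K (Submodule.span K ({v, w} : Set (Fin 3 → K))) = 2 :=
  gsc_finrank_span_li (gsc_li_pair hv hw)

lemma gsc_eq_span_pair {v w : Fin 3 → K} {W : Submodule K (Fin 3 → K)}
    (hv : v ≠ 0) (hw : w ∉ Submodule.span K {v}) (hW : Module.finrank K W = 2)
    (hvW : v ∈ W) (hwW : w ∈ W) : W = Submodule.span K ({v, w} : Set (Fin 3 → K)) := by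
  symm
  apply Submodule.eq_of_le_of_finrank_le
  · rw [Submodule.span_le]
    rintro x (rfl | rfl) <;> assumption
  · rw [hW, gsc_finrank_span_pair hv hw]

/-- key decomposition of a vanishing linear form in terms of two independent ones -/
lemma gsc_hom1_decomp {v c₁ c₂ : Fin 3 → K} (hv : v ≠ 0)
    (hc : LinearIndependent K ![c₁, c₂])
    (h₁ : gscDot c₁ v = 0) (h₂ : gscDot c₂ v = 0)
    {f : MvPolynomial (Fin 3) K} (hf : f.IsHomogeneous 1)
    (hfv : MvPolynomial.eval v f = 0) :
    ∃ a b : K, f = MvPolynomial.C a * gscLin c₁ + MvPolynomial.C b * gscLin c₂ := by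
  have hD : Module.finrank K (LinearMap.ker (gscDot v)) = 2 := finrank_ker_gscDot hv
  have hsub : Submodule.span K ({c₁, c₂} : Set (Fin 3 → K)) ≤ LinearMap.ker (gscDot v) := by
    rw [Submodule.span_le]
    rintro x (rfl | rfl) <;>
      simp only [SetLike.mem_coe, LinearMap.mem_ker, gscDot_comm v] <;> assumption
  have hfr : Module.finrank K (Submodule.span K ({c₁, c₂} : Set (Fin 3 → K))) = 2 :=
    gsc_finrank_span_li hc
  have hEq : Submodule.span K ({c₁, c₂} : Set (Fin 3 → K)) = LinearMap.ker (gscDot v) :=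
    Submodule.eq_of_le_of_finrank_le hsub (by rw [hD, hfr])
  have hcf : gscCvec f ∈ Submodule.span K ({c₁, c₂} : Set (Fin 3 → K)) := by
    rw [hEq, LinearMap.mem_ker, gscDot_comm]
    rw [← eval_gscLin, ← hom1_eq_gscLin hf]
    exact hfv
  obtain ⟨a, b, hab⟩ := Submodule.mem_span_pair.mp hcf
  refine ⟨a, b, ?_⟩
  rw [hom1_eq_gscLin hf, ← hab, gscLin_add, gscLin_smul, gscLin_smul]

lemma gscDot_smul (a : K) (c : Fin 3 → K) : gscDot (a • c) = a • gscDot c := by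
  ext w
  simp [gscDot_apply, Finset.mul_sum, mul_assoc]

lemma gsc_li_of_ker_ne {c₁ c₂ : Fin 3 → K} (h1 : c₁ ≠ 0) (h2 : c₂ ≠ 0)
    (hne : LinearMap.ker (gscDot c₁) ≠ LinearMap.ker (gscDot c₂)) :
    LinearIndependent K ![c₁, c₂] := by
  rw [LinearIndependent.pair_iff' h1]
  intro a hc
  apply hne
  have ha : a ≠ 0 := by
    rintro rfl
    apply h2
    rw [← hc, zero_smul]
  rw [← hc, gscDot_smul, LinearMap.ker_smul _ a ha]

end GscAuxB
/-- The vanishing (prime) ideal of a point `p ∈ ℙ²`: the ideal generated by the linear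
forms vanishing at `p`. -/
noncomputable def pointIdeal {K : Type*} [Field K] (p : ℙ K (Fin 3 → K)) :
    Ideal (MvPolynomial (Fin 3) K) :=
  Ideal.span { f | f.IsHomogeneous 1 ∧ MvPolynomial.eval p.rep f = 0 }

noncomputable section GscAuxC

variable {K : Type*} [Field K]

/-- substitution by `X 0, 0, 0` -/
def gscSig : MvPolynomial (Fin 3) K →ₐ[K] MvPolynomial (Fin 3) K :=
  aeval (fun i => if i = 0 then (X 0 : MvPolynomial (Fin 3) K) else 0)

lemma gsc_sub_sig_mem (f : MvPolynomial (Fin 3) K) :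
    f - gscSig f ∈ Ideal.span ({X 1, X 2} : Set (MvPolynomial (Fin 3) K)) := by
  induction f using MvPolynomial.induction_on with
  | C a => simp [gscSig]
  | add p q hp hq =>
      have : p + q - gscSig (p + q) = (p - gscSig p) + (q - gscSig q) := by
        rw [map_add]; ring
      rw [this]
      exact Ideal.add_mem _ hp hq
  | mul_X p i hp =>
      rcases eq_or_ne i 0 with rfl | hi
      · have hX0 : gscSig (X 0 : MvPolynomial (Fin 3) K) = X 0 := by
          simp [gscSig]
        have : p * X 0 - gscSig (p * X 0) = (p - gscSig p) * X 0 := by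
          rw [map_mul, hX0]
          ring
        rw [this]
        exact Ideal.mul_mem_right _ _ hp
      · have : p * X i - gscSig (p * X i) = p * X i := by
          rw [map_mul, gscSig, aeval_X, if_neg hi, mul_zero, sub_zero]
        rw [this]
        apply Ideal.mul_mem_left
        apply Ideal.subset_span
        have : i = 1 ∨ i = 2 := by omega
        rcases this with rfl | rfl
        · exact Set.mem_insert _ _
        · exact Set.mem_insert_of_mem _ rfl

lemma gsc_span_X12_eq_ker :
    Ideal.span ({X 1, X 2} : Set (MvPolynomial (Fin 3) K)) = RingHom.ker (gscSig (K := K)) := by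
  apply le_antisymm
  · rw [Ideal.span_le]
    rintro g (rfl | rfl) <;>
      simp [SetLike.mem_coe, RingHom.mem_ker, gscSig, aeval_X]
  · intro f hf
    rw [RingHom.mem_ker] at hf
    have := gsc_sub_sig_mem (K := K) f
    rwa [hf, sub_zero] at this

lemma gscLin_sum {ι : Type*} (s : Finset ι) (g : ι → Fin 3 → K) :
    gscLin (∑ i ∈ s, g i) = ∑ i ∈ s, gscLin (g i) := by
  classical
  induction s using Finset.induction with
  | empty => simp [gscLin_zero]
  | insert a s h ih => rw [Finset.sum_insert h, Finset.sum_insert h, gscLin_add, ih]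

/-- substitution associated to a matrix -/
def gscSubst (A : Matrix (Fin 3) (Fin 3) K) :
    MvPolynomial (Fin 3) K →ₐ[K] MvPolynomial (Fin 3) K :=
  aeval (fun i => gscLin (A i))

lemma gscSubst_X (A : Matrix (Fin 3) (Fin 3) K) (i : Fin 3) :
    gscSubst A (X i) = gscLin (A i) := aeval_X _ i

lemma gscSubst_gscLin (A : Matrix (Fin 3) (Fin 3) K) (c : Fin 3 → K) :
    gscSubst A (gscLin c) = gscLin (Matrix.vecMul c A) := by
  rw [gscLin]
  rw [map_sum]
  have : ∀ i, gscSubst A (C (c i) * X i) = C (c i) * gscLin (A i) := by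
    intro i
    rw [map_mul, gscSubst_X]
    congr 1
    exact algHom_C _ _
  simp_rw [this]
  have : Matrix.vecMul c A = ∑ i, c i • A i := by
    ext j
    rw [Matrix.vecMul, dotProduct]
    simp [Finset.sum_apply]
  rw [this, gscLin_sum]
  apply Finset.sum_congr rfl
  intro i _
  rw [gscLin_smul]

lemma gscLin_one_row (i : Fin 3) : gscLin ((1 : Matrix (Fin 3) (Fin 3) K) i) = X i := by
  rw [gscLin]
  rw [Finset.sum_eq_single i]
  · simp [Matrix.one_apply]
  · intro j _ hji
    simp [Matrix.one_apply, Ne.symm hji]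
  · simp

lemma gscSubst_comp_eval (A B : Matrix (Fin 3) (Fin 3) K) (hBA : B * A = 1)
    (f : MvPolynomial (Fin 3) K) : gscSubst A (gscSubst B f) = f := by
  have : (gscSubst A).comp (gscSubst B) = AlgHom.id K _ := by
    apply MvPolynomial.algHom_ext
    intro i
    rw [AlgHom.comp_apply, gscSubst_X, gscSubst_gscLin]
    have : Matrix.vecMul (B i) A = (B * A) i := by
      ext j
      rw [Matrix.mul_apply, Matrix.vecMul, dotProduct]
    rw [this, hBA, gscLin_one_row, AlgHom.id_apply]
  calc gscSubst A (gscSubst B f) = ((gscSubst A).comp (gscSubst B)) f := rfl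
    _ = f := by rw [this]; rfl

end GscAuxC
section GscAuxD

variable {K : Type*} [Field K]

theorem gsc_pointIdeal_eq_ker (p : ℙ K (Fin 3 → K)) :
    ∃ τ : MvPolynomial (Fin 3) K →ₐ[K] MvPolynomial (Fin 3) K,
      pointIdeal p = RingHom.ker τ := by
  set v := p.rep with hvdef
  have hv : v ≠ 0 := p.rep_nonzero
  set D := LinearMap.ker (gscDot v) with hD
  have hD2 : Module.finrank K D = 2 := finrank_ker_gscDot hv
  obtain ⟨b, hb⟩ := exists_linearIndependent_of_le_finrank (R := K) (M := D) hD2.ge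
  set c₁ : Fin 3 → K := (b 0 : Fin 3 → K) with hc₁
  set c₂ : Fin 3 → K := (b 1 : Fin 3 → K) with hc₂
  have hbli : LinearIndependent K (fun i => ((b i : Fin 3 → K))) :=
    hb.map' D.subtype (Submodule.ker_subtype D)
  have hpair : LinearIndependent K ![c₁, c₂] := by
    have : ![c₁, c₂] = fun i => ((b i : Fin 3 → K)) := by
      funext i
      fin_cases i <;> rfl
    rw [this]
    exact hbli
  have hc₁D : gscDot v c₁ = 0 := (b 0).2
  have hc₂D : gscDot v c₂ = 0 := (b 1).2
  obtain ⟨t, ht⟩ := Function.ne_iff.mp hv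
  have ht' : v t ≠ 0 := by simpa using ht
  set r0 : Fin 3 → K := Pi.single t 1 with hr0
  have hr0v : gscDot v r0 = v t := by
    rw [gscDot_apply]
    simp [hr0, Pi.single_apply, mul_ite, Finset.sum_ite_eq']
  have hr0D : r0 ∉ D := by
    rw [hD, LinearMap.mem_ker, hr0v]
    exact ht'
  have htriple : LinearIndependent K ![r0, c₁, c₂] := by
    rw [show (![r0, c₁, c₂] : Fin 3 → Fin 3 → K) = Fin.cons r0 ![c₁, c₂] from rfl]
    rw [linearIndependent_fin_cons]
    refine ⟨hpair, ?_⟩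
    intro hmem
    apply hr0D
    have hle : Submodule.span K (Set.range ![c₁, c₂]) ≤ D := by
      rw [gsc_range_pair, Submodule.span_le]
      rintro x (rfl | rfl)
      · exact LinearMap.mem_ker.mpr hc₁D
      · exact LinearMap.mem_ker.mpr hc₂D
    exact hle hmem
  set A : Matrix (Fin 3) (Fin 3) K := Matrix.of ![r0, c₁, c₂] with hA
  have hAunit : IsUnit A := Matrix.linearIndependent_rows_iff_isUnit.mp htriple
  have hdet : IsUnit A.det := (Matrix.isUnit_iff_isUnit_det A).mp hAunit
  set B := A⁻¹ with hB
  have hAB : A * B = 1 := Matrix.mul_nonsing_inv A hdet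
  have hBA : B * A = 1 := Matrix.nonsing_inv_mul A hdet
  have hA1 : A 1 = c₁ := rfl
  have hA2 : A 2 = c₂ := rfl
  refine ⟨(gscSig (K := K)).comp (gscSubst B), ?_⟩
  have hlinmem : ∀ c : Fin 3 → K, gscDot v c = 0 → gscLin c ∈ pointIdeal p := by
    intro c hc
    apply Ideal.subset_span
    refine ⟨gscLin_isHomogeneous c, ?_⟩
    rw [eval_gscLin, gscDot_comm, ← hvdef, hc]
  have hτlin : ∀ i : Fin 3, (gscSig (K := K)).comp (gscSubst B) (gscLin (A i)) = gscSig (X i : MvPolynomial (Fin 3) K) := by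
    intro i
    rw [AlgHom.comp_apply, gscSubst_gscLin]
    have : Matrix.vecMul (A i) B = (A * B) i := by
      ext j
      rw [Matrix.mul_apply, Matrix.vecMul, dotProduct]
    rw [this, hAB, gscLin_one_row]
  apply le_antisymm
  · rw [pointIdeal, Ideal.span_le]
    rintro f ⟨hf1, hfv⟩
    obtain ⟨a, b', hab⟩ := gsc_hom1_decomp hv hpair
      (by rw [gscDot_comm]; exact hc₁D) (by rw [gscDot_comm]; exact hc₂D) hf1 hfv
    have h1 : (gscSig (K := K)).comp (gscSubst B) (gscLin c₁) = 0 := by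
      rw [← hA1, hτlin]
      simp [gscSig]
    have h2 : (gscSig (K := K)).comp (gscSubst B) (gscLin c₂) = 0 := by
      rw [← hA2, hτlin]
      simp [gscSig]
    simp only [SetLike.mem_coe, RingHom.mem_ker]
    rw [hab, map_add, map_mul, map_mul, h1, h2, mul_zero, mul_zero, add_zero]
  · intro f hf
    rw [RingHom.mem_ker] at hf
    have hker : gscSubst B f ∈ RingHom.ker (gscSig (K := K)) := by
      rw [RingHom.mem_ker]
      exact hf
    rw [← gsc_span_X12_eq_ker] at hker
    obtain ⟨g₁, g₂, hg⟩ := Ideal.mem_span_pair.mp hker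
    have hfeq : f = gscSubst A (gscSubst B f) := (gscSubst_comp_eval A B hBA f).symm
    rw [hfeq, ← hg, map_add, map_mul, map_mul, gscSubst_X, gscSubst_X, hA1, hA2]
    apply Ideal.add_mem
    · exact Ideal.mul_mem_left _ _ (hlinmem c₁ hc₁D)
    · exact Ideal.mul_mem_left _ _ (hlinmem c₂ hc₂D)

theorem gsc_pointIdeal_isPrime (p : ℙ K (Fin 3 → K)) : (pointIdeal p).IsPrime := by
  obtain ⟨τ, hτ⟩ := gsc_pointIdeal_eq_ker p
  rw [hτ]
  exact RingHom.ker_isPrime τ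

end GscAuxD
section GscAuxE

variable {K : Type*} [Field K]

open Projectivization in
lemma gsc_submodule_le_iff (p : ℙ K (Fin 3 → K)) (W : Submodule K (Fin 3 → K)) :
    p.submodule ≤ W ↔ p.rep ∈ W := by
  rw [Projectivization.submodule_eq, Submodule.span_singleton_le_iff_mem]

lemma gsc_rep_not_mem {p q : ℙ K (Fin 3 → K)} (h : p ≠ q) :
    q.rep ∉ Submodule.span K {p.rep} := by
  intro hc
  obtain ⟨a, ha⟩ := Submodule.mem_span_singleton.mp hc
  have ha0 : a ≠ 0 := by
    rintro rfl
    exact q.rep_nonzero (by rw [← ha, zero_smul])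
  apply h
  have := Projectivization.mk_rep p
  have h2 := Projectivization.mk_rep q
  rw [← this, ← h2]
  rw [(Projectivization.mk_eq_mk_iff K _ _ p.rep_nonzero q.rep_nonzero)]
  refine ⟨(Units.mk0 a ha0)⁻¹, ?_⟩
  rw [← ha, Units.smul_def, smul_smul]
  simp [inv_mul_cancel₀ ha0]

lemma gsc_submodule_eq_span {v : Fin 3 → K} (hv : v ≠ 0) {q : ℙ K (Fin 3 → K)}
    (hq : q.rep ∈ Submodule.span K {v}) : q.submodule = Submodule.span K {v} := by
  rw [Projectivization.submodule_eq]
  apply Submodule.eq_of_le_of_finrank_le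
  · rw [Submodule.span_singleton_le_iff_mem]; exact hq
  · rw [finrank_span_singleton hv, finrank_span_singleton q.rep_nonzero]

variable {n : ℕ} (ℓ : Fin n → MvPolynomial (Fin 3) K)

/-- kernel line of the `j`-th form -/
noncomputable def gscKerW (j : Fin n) : Submodule K (Fin 3 → K) :=
  LinearMap.ker (gscDot (gscCvec (ℓ j)))

variable (hhom : ∀ j, (ℓ j).IsHomogeneous 1) (hne : ∀ j, ℓ j ≠ 0)

include hhom hne

lemma gsc_finrank_kerW (j : Fin n) : Module.finrank K (gscKerW ℓ j) = 2 :=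
  finrank_ker_gscDot (gscCvec_ne_zero (hhom j) (hne j))

omit hne in
lemma gsc_mem_kerW (j : Fin n) (u : Fin 3 → K) :
    u ∈ gscKerW ℓ j ↔ MvPolynomial.eval u (ℓ j) = 0 := by
  rw [gscKerW, LinearMap.mem_ker]
  conv_rhs => rw [hom1_eq_gscLin (hhom j), eval_gscLin]

lemma gsc_vanish_iff (j : Fin n) (W : Submodule K (Fin 3 → K))
    (hW : Module.finrank K W = 2) :
    (∀ u ∈ W, MvPolynomial.eval u (ℓ j) = 0) ↔ W = gscKerW ℓ j := by
  constructor
  · intro h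
    apply Submodule.eq_of_le_of_finrank_le
    · intro u hu
      rw [gsc_mem_kerW ℓ hhom]
      exact h u hu
    · rw [hW, gsc_finrank_kerW ℓ hhom hne]
  · rintro rfl
    intro u hu
    rw [← gsc_mem_kerW ℓ hhom]
    exact hu

end GscAuxE
section GscAuxF

lemma gsc_sum_sub_one {ι : Type*} [DecidableEq ι] (t : Finset ι) (g : ι → ℕ)
    (h : ∀ i ∈ t, 1 ≤ g i) : ∑ i ∈ t, (g i - 1) + t.card = ∑ i ∈ t, g i := by
  induction t using Finset.induction with
  | empty => simp
  | @insert a s ha ih =>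
      rw [Finset.sum_insert ha, Finset.sum_insert ha, Finset.card_insert_of_notMem ha]
      have h1 := h a (Finset.mem_insert_self a s)
      have h2 := ih (fun i hi => h i (Finset.mem_insert_of_mem hi))
      omega

variable {K : Type*} [Field K] {n : ℕ} (ℓ : Fin n → MvPolynomial (Fin 3) K)
variable (hhom : ∀ j, (ℓ j).IsHomogeneous 1) (hne : ∀ j, ℓ j ≠ 0)
variable (X : Finset (ℙ K (Fin 3 → K)))
variable (hlines : ∀ W : Submodule K (Fin 3 → K), Module.finrank K W = 2 →
      (Finset.univ.filter fun j : Fin n =>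
        ∀ v ∈ W, MvPolynomial.eval v (ℓ j) = 0).card
        = (X.filter fun p => p.submodule ≤ W).card - 1)

include hhom hne hlines

lemma gsc_T_facts (v : Fin 3 → K)
    (W : Submodule K (Fin 3 → K))
    (hW : W ∈ (Finset.univ.filter fun j : Fin n =>
        MvPolynomial.eval v (ℓ j) = 0).image (gscKerW ℓ)) :
    Module.finrank K W = 2 ∧ v ∈ W ∧ 2 ≤ (X.filter fun p => p.submodule ≤ W).card := by
  obtain ⟨j₀, hj₀, rfl⟩ := Finset.mem_image.mp hW
  rw [Finset.mem_filter] at hj₀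
  have h2 : Module.finrank K (gscKerW ℓ j₀) = 2 := gsc_finrank_kerW ℓ hhom hne j₀
  refine ⟨h2, (gsc_mem_kerW ℓ hhom j₀ v).mpr hj₀.2, ?_⟩
  have hcnt := hlines (gscKerW ℓ j₀) h2
  have hj₀mem : j₀ ∈ (Finset.univ.filter fun j : Fin n =>
      ∀ u ∈ gscKerW ℓ j₀, MvPolynomial.eval u (ℓ j) = 0) := by
    rw [Finset.mem_filter]
    exact ⟨Finset.mem_univ _, fun u hu => (gsc_mem_kerW ℓ hhom j₀ u).mp hu⟩
  have hpos : 0 < (Finset.univ.filter fun j : Fin n =>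
      ∀ u ∈ gscKerW ℓ j₀, MvPolynomial.eval u (ℓ j) = 0).card :=
    Finset.card_pos.mpr ⟨j₀, hj₀mem⟩
  omega

lemma gsc_count (v : Fin 3 → K) :
    (Finset.univ.filter fun j : Fin n => MvPolynomial.eval v (ℓ j) = 0).card
      = ∑ W ∈ (Finset.univ.filter fun j : Fin n =>
            MvPolynomial.eval v (ℓ j) = 0).image (gscKerW ℓ),
          ((X.filter fun p => p.submodule ≤ W).card - 1) := by
  set S := Finset.univ.filter fun j : Fin n => MvPolynomial.eval v (ℓ j) = 0 with hS
  set T := S.image (gscKerW ℓ) with hT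
  rw [Finset.card_eq_sum_card_fiberwise
    (f := gscKerW ℓ) (t := T) (fun j hj => Finset.mem_image_of_mem _ hj)]
  apply Finset.sum_congr rfl
  intro W hW
  obtain ⟨h2, hvW, -⟩ := gsc_T_facts ℓ hhom hne X hlines v W hW
  rw [← hlines W h2]
  congr 1
  ext j
  simp only [Finset.mem_filter, Finset.mem_univ, true_and, hS]
  constructor
  · rintro ⟨-, rfl⟩
    exact fun u hu => (gsc_mem_kerW ℓ hhom j u).mp hu
  · intro h
    have hk : W = gscKerW ℓ j := (gsc_vanish_iff ℓ hhom hne j W h2).mp h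
    exact ⟨h v hvW, hk.symm⟩

lemma gsc_lower {p : ℙ K (Fin 3 → K)} (hp : p ∈ X) :
    X.card - 1 ≤ (Finset.univ.filter fun j : Fin n =>
      MvPolynomial.eval p.rep (ℓ j) = 0).card := by
  classical
  set v := p.rep with hv
  set S := Finset.univ.filter fun j : Fin n => MvPolynomial.eval v (ℓ j) = 0 with hS
  set T := S.image (gscKerW ℓ) with hT
  rw [gsc_count ℓ hhom hne X hlines v]
  have hsub : X.erase p ⊆ T.biUnion fun W => (X.filter fun q => q.submodule ≤ W).erase p := by
    intro q hq
    rw [Finset.mem_erase] at hq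
    obtain ⟨hqp, hqX⟩ := hq
    set Wq : Submodule K (Fin 3 → K) := Submodule.span K ({v, q.rep} : Set (Fin 3 → K)) with hWq
    have hqrep : q.rep ∉ Submodule.span K {v} := gsc_rep_not_mem (Ne.symm hqp)
    have h2 : Module.finrank K Wq = 2 := gsc_finrank_span_pair p.rep_nonzero hqrep
    have hvWq : v ∈ Wq := Submodule.subset_span (Set.mem_insert _ _)
    have hqWq : q.rep ∈ Wq := Submodule.subset_span (Set.mem_insert_of_mem _ rfl)
    have hcard2 : 2 ≤ (X.filter fun r => r.submodule ≤ Wq).card := by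
      rw [show (2:ℕ) ≤ (X.filter fun r => r.submodule ≤ Wq).card ↔
        1 < (X.filter fun r => r.submodule ≤ Wq).card from by omega, Finset.one_lt_card]
      refine ⟨p, ?_, q, ?_, hqp.symm⟩ <;>
        rw [Finset.mem_filter, gsc_submodule_le_iff]
      · exact ⟨hp, hvWq⟩
      · exact ⟨hqX, hqWq⟩
    have hcnt := hlines Wq h2
    have hpos : 0 < (Finset.univ.filter fun j : Fin n =>
        ∀ u ∈ Wq, MvPolynomial.eval u (ℓ j) = 0).card := by omega
    obtain ⟨j, hj⟩ := Finset.card_pos.mp hpos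
    rw [Finset.mem_filter] at hj
    have hjS : j ∈ S := by
      rw [hS, Finset.mem_filter]
      exact ⟨Finset.mem_univ _, hj.2 v hvWq⟩
    have hkj : Wq = gscKerW ℓ j := (gsc_vanish_iff ℓ hhom hne j Wq h2).mp hj.2
    rw [Finset.mem_biUnion]
    refine ⟨Wq, ?_, ?_⟩
    · rw [hT, hkj]
      exact Finset.mem_image_of_mem _ hjS
    · rw [Finset.mem_erase, Finset.mem_filter, gsc_submodule_le_iff]
      exact ⟨hqp, hqX, hqWq⟩
  calc X.card - 1 = (X.erase p).card := (Finset.card_erase_of_mem hp).symm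
    _ ≤ (T.biUnion fun W => (X.filter fun q => q.submodule ≤ W).erase p).card :=
        Finset.card_le_card hsub
    _ ≤ ∑ W ∈ T, ((X.filter fun q => q.submodule ≤ W).erase p).card :=
        Finset.card_biUnion_le
    _ ≤ ∑ W ∈ T, ((X.filter fun q => q.submodule ≤ W).card - 1) := by
        apply Finset.sum_le_sum
        intro W hW
        rw [Finset.card_erase_of_mem]
        obtain ⟨-, hvW, -⟩ := gsc_T_facts ℓ hhom hne X hlines v W hW
        rw [Finset.mem_filter, gsc_submodule_le_iff]
        exact ⟨hp, hvW⟩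

lemma gsc_upper {v : Fin 3 → K} (hv : v ≠ 0)
    (hnov : ∀ q ∈ X, q.submodule ≠ Submodule.span K {v})
    {j k : Fin n} (hj : MvPolynomial.eval v (ℓ j) = 0)
    (hk : MvPolynomial.eval v (ℓ k) = 0) (hjk : gscKerW ℓ j ≠ gscKerW ℓ k) :
    (Finset.univ.filter fun j : Fin n =>
      MvPolynomial.eval v (ℓ j) = 0).card ≤ X.card - 2 := by
  classical
  set S := Finset.univ.filter fun j : Fin n => MvPolynomial.eval v (ℓ j) = 0 with hS
  set T := S.image (gscKerW ℓ) with hT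
  have hjS : j ∈ S := by rw [hS, Finset.mem_filter]; exact ⟨Finset.mem_univ _, hj⟩
  have hkS : k ∈ S := by rw [hS, Finset.mem_filter]; exact ⟨Finset.mem_univ _, hk⟩
  have hTcard : 2 ≤ T.card := by
    rw [show (2:ℕ) ≤ T.card ↔ 1 < T.card from by omega, Finset.one_lt_card]
    exact ⟨gscKerW ℓ j, Finset.mem_image_of_mem _ hjS,
      gscKerW ℓ k, Finset.mem_image_of_mem _ hkS, hjk⟩
  have hdisj : ∀ W ∈ T, ∀ W' ∈ T, W ≠ W' →
      Disjoint (X.filter fun p => p.submodule ≤ W) (X.filter fun p => p.submodule ≤ W') := by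
    intro W hW W' hW' hne'
    rw [Finset.disjoint_left]
    intro q hq hq'
    rw [Finset.mem_filter, gsc_submodule_le_iff] at hq hq'
    apply hne'
    obtain ⟨h2, hvW, -⟩ := gsc_T_facts ℓ hhom hne X hlines v W hW
    obtain ⟨h2', hvW', -⟩ := gsc_T_facts ℓ hhom hne X hlines v W' hW'
    have hqv : q.rep ∉ Submodule.span K {v} := by
      intro hc
      exact hnov q hq.1 (gsc_submodule_eq_span hv hc)
    rw [gsc_eq_span_pair hv hqv h2 hvW hq.2, gsc_eq_span_pair hv hqv h2' hvW' hq'.2]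
  have hsum : ∑ W ∈ T, (X.filter fun p => p.submodule ≤ W).card ≤ X.card := by
    rw [← Finset.card_biUnion hdisj]
    apply Finset.card_le_card
    intro q hq
    rw [Finset.mem_biUnion] at hq
    obtain ⟨W, -, hqW⟩ := hq
    exact (Finset.mem_filter.mp hqW).1
  have hone : ∀ W ∈ T, 1 ≤ (X.filter fun p => p.submodule ≤ W).card := by
    intro W hW
    have := (gsc_T_facts ℓ hhom hne X hlines v W hW).2.2
    omega
  have key := gsc_sum_sub_one T (fun W => (X.filter fun p => p.submodule ≤ W).card) hone
  rw [gsc_count ℓ hhom hne X hlines v, ← hS, ← hT]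
  beta_reduce at key
  omega

end GscAuxF
/-- **Interpolating points of `ℙ²` by the arrangement of connecting lines.**
Let `X ⊂ ℙ²` be `m` distinct points, not all collinear, and let `Λ_X = (ℓ 1, …, ℓ n)`
be the list of linear forms defining the lines of the multi-arrangement `𝒜_X`: each
`ℓ j` is a nonzero linear form, and for every projective line `W`, the number of
indices `j` with `ℓ j` vanishing on `W` is `|W ∩ X| − 1` (so exactly the lines through
at least two points of `X` occur, a line with exactly `s` points of `X` occurring
`s − 1` times).  Then `√(I_{n−m+2}(Λ_X)) = I(X)`. -/
theorem gscv_interpolates_points_in_P2 (K : Type*) [Field K] [Infinite K]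
    (m : ℕ) (X : Finset (ℙ K (Fin 3 → K))) (hX : X.card = m)
    (hncol : ¬ ∃ W : Submodule K (Fin 3 → K), Module.finrank K W = 2 ∧
      ∀ p ∈ X, p.submodule ≤ W)
    (n : ℕ) (ℓ : Fin n → MvPolynomial (Fin 3) K)
    (hhom : ∀ j, (ℓ j).IsHomogeneous 1) (hne : ∀ j, ℓ j ≠ 0)
    (hlines : ∀ W : Submodule K (Fin 3 → K), Module.finrank K W = 2 →
      (Finset.univ.filter fun j : Fin n =>
        ∀ v ∈ W, MvPolynomial.eval v (ℓ j) = 0).card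
        = (X.filter fun p => p.submodule ≤ W).card - 1) :
    (gscIdeal ℓ (n - m + 2)).radical = ⨅ p ∈ X, pointIdeal p := by
  classical
  subst hX
  -- `X` has at least 3 points
  have hm3 : 3 ≤ X.card := by
    by_contra hc
    push_neg at hc
    have hcover : ∃ a b : ℙ K (Fin 3 → K), ∀ p ∈ X, p = a ∨ p = b := by
      rcases X.eq_empty_or_nonempty with rfl | ⟨a, ha⟩
      · refine ⟨Projectivization.mk K (Pi.single 0 1 : Fin 3 → K) ?_, Projectivization.mk K (Pi.single 0 1 : Fin 3 → K) ?_, by simp⟩ <;>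
          · intro hz
            have := congrFun hz 0
            simp at this
      · rcases (X.erase a).eq_empty_or_nonempty with he | ⟨b, hb⟩
        · refine ⟨a, a, fun p hp => ?_⟩
          by_contra hpc
          push_neg at hpc
          have : p ∈ X.erase a := Finset.mem_erase.mpr ⟨hpc.1, hp⟩
          rw [he] at this
          exact absurd this (Finset.notMem_empty p)
        · refine ⟨a, b, fun p hp => ?_⟩
          by_contra hpc
          push_neg at hpc
          obtain ⟨hba, hbX⟩ := Finset.mem_erase.mp hb
          have hsub : ({a, b, p} : Finset (ℙ K (Fin 3 → K))) ⊆ X := by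
            intro x hx
            rcases Finset.mem_insert.mp hx with rfl | hx
            · exact ha
            rcases Finset.mem_insert.mp hx with rfl | hx
            · exact hbX
            · rw [Finset.mem_singleton] at hx
              subst hx; exact hp
          have hcard : ({a, b, p} : Finset (ℙ K (Fin 3 → K))).card = 3 := by
            rw [Finset.card_insert_of_notMem, Finset.card_insert_of_notMem,
              Finset.card_singleton]
            · rw [Finset.mem_singleton]; exact Ne.symm hpc.2
            · intro hmem
              rcases Finset.mem_insert.mp hmem with h' | h'
              · exact hba h'.symm
              · rw [Finset.mem_singleton] at h'
                exact hpc.1 h'.symm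
          have := Finset.card_le_card hsub
          omega
    obtain ⟨a, b, hab⟩ := hcover
    obtain ⟨c, hcmem, hc0⟩ := exists_ne_zero_mem_inf
      (two_le_finrank_ker_gscDot a.rep) (two_le_finrank_ker_gscDot b.rep)
    apply hncol
    refine ⟨LinearMap.ker (gscDot c), finrank_ker_gscDot hc0, ?_⟩
    intro p hp
    rw [gsc_submodule_le_iff, LinearMap.mem_ker, gscDot_comm]
    rcases hab p hp with rfl | rfl
    · exact LinearMap.mem_ker.mp hcmem.1
    · exact LinearMap.mem_ker.mp hcmem.2
  have hX0 : X.Nonempty := Finset.card_pos.mp (by omega)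
  obtain ⟨p₀, hp₀⟩ := hX0
  -- `X.card ≤ n`
  have hmn : X.card ≤ n := by
    by_contra hc
    push_neg at hc
    have hSuniv : ∀ p ∈ X, (Finset.univ.filter fun j : Fin n =>
        MvPolynomial.eval p.rep (ℓ j) = 0) = Finset.univ := by
      intro p hp
      apply Finset.eq_univ_of_card
      have h1 := gsc_lower ℓ hhom hne X hlines hp
      have h2 := Finset.card_le_univ (Finset.univ.filter fun j : Fin n =>
        MvPolynomial.eval p.rep (ℓ j) = 0)
      rw [Fintype.card_fin] at h2
      rw [Fintype.card_fin]
      omega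
    have hn1 : 1 ≤ n := by
      have h1 := gsc_lower ℓ hhom hne X hlines hp₀
      have h2 := Finset.card_le_univ (Finset.univ.filter fun j : Fin n =>
        MvPolynomial.eval p₀.rep (ℓ j) = 0)
      rw [Fintype.card_fin] at h2
      omega
    set j₀ : Fin n := ⟨0, by omega⟩
    apply hncol
    refine ⟨gscKerW ℓ j₀, gsc_finrank_kerW ℓ hhom hne j₀, ?_⟩
    intro p hp
    rw [gsc_submodule_le_iff, gsc_mem_kerW ℓ hhom]
    have hj : j₀ ∈ Finset.univ.filter fun j : Fin n =>
        MvPolynomial.eval p.rep (ℓ j) = 0 := by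
      rw [hSuniv p hp]
      exact Finset.mem_univ j₀
    exact (Finset.mem_filter.mp hj).2
  -- the generators of the GSC ideal lie in every point ideal
  have hIa_le : ∀ p ∈ X, gscIdeal ℓ (n - X.card + 2) ≤ pointIdeal p := by
    intro p hp
    rw [gscIdeal, Ideal.span_le]
    rintro g ⟨s, hs, rfl⟩
    have hex : ∃ j ∈ s, MvPolynomial.eval p.rep (ℓ j) = 0 := by
      by_contra hcc
      push_neg at hcc
      have hsub : s ⊆ Finset.univ.filter fun j : Fin n =>
          ¬ (MvPolynomial.eval p.rep (ℓ j) = 0) := by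
        intro j hj
        rw [Finset.mem_filter]
        exact ⟨Finset.mem_univ _, hcc j hj⟩
      have h1 := Finset.card_le_card hsub
      have h2 := Finset.card_filter_add_card_filter_not
        (s := (Finset.univ : Finset (Fin n)))
        (p := fun j : Fin n => MvPolynomial.eval p.rep (ℓ j) = 0)
      rw [Finset.card_univ, Fintype.card_fin] at h2
      have h3 := gsc_lower ℓ hhom hne X hlines hp
      omega
    obtain ⟨j, hjs, hj0⟩ := hex
    rw [SetLike.mem_coe, ← Finset.mul_prod_erase s ℓ hjs]
    exact Ideal.mul_mem_right _ _ (Ideal.subset_span ⟨hhom j, hj0⟩)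
  apply le_antisymm
  · refine le_iInf fun p => le_iInf fun hp => ?_
    calc (gscIdeal ℓ (n - X.card + 2)).radical
        ≤ (pointIdeal p).radical := Ideal.radical_mono (hIa_le p hp)
      _ = pointIdeal p := (gsc_pointIdeal_isPrime p).radical
  · rw [Ideal.radical_eq_sInf]
    apply le_sInf
    rintro J ⟨hJI, hJp⟩
    set Tpr := Finset.univ.filter (fun j : Fin n => ℓ j ∈ J) with hTpr
    have hTc : X.card - 1 ≤ Tpr.card := by
      by_contra hcc
      push_neg at hcc
      rw [hTpr] at hcc
      have h2 := Finset.card_filter_add_card_filter_not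
        (s := (Finset.univ : Finset (Fin n))) (p := fun j : Fin n => ℓ j ∈ J)
      rw [Finset.card_univ, Fintype.card_fin] at h2
      have hle : n - X.card + 2 ≤ (Finset.univ.filter fun j : Fin n => ¬ (ℓ j ∈ J)).card := by
        omega
      obtain ⟨s, hssub, hscard⟩ := Finset.exists_subset_card_eq hle
      have hmemIa : (∏ i ∈ s, ℓ i) ∈ gscIdeal ℓ (n - X.card + 2) :=
        Ideal.subset_span ⟨s, hscard, rfl⟩
      haveI := hJp
      obtain ⟨i, his, hiJ⟩ := Ideal.IsPrime.prod_mem_iff.mp (hJI hmemIa)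
      exact (Finset.mem_filter.mp (hssub his)).2 hiJ
    by_cases hsame : ∀ j ∈ Tpr, ∀ k ∈ Tpr, gscKerW ℓ j = gscKerW ℓ k
    · exfalso
      have hTne : Tpr.Nonempty := Finset.card_pos.mp (by omega)
      obtain ⟨j₀, hj₀⟩ := hTne
      have h2 := gsc_finrank_kerW ℓ hhom hne j₀
      have hsub : Tpr ⊆ Finset.univ.filter fun j : Fin n =>
          ∀ u ∈ gscKerW ℓ j₀, MvPolynomial.eval u (ℓ j) = 0 := by
        intro j hj
        rw [Finset.mem_filter]
        refine ⟨Finset.mem_univ _, fun u hu => ?_⟩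
        rw [← gsc_mem_kerW ℓ hhom, hsame j hj j₀ hj₀]
        exact hu
      have hcard := Finset.card_le_card hsub
      have hcnt := hlines (gscKerW ℓ j₀) h2
      have hfle : (X.filter fun p => p.submodule ≤ gscKerW ℓ j₀).card ≤ X.card :=
        Finset.card_le_card (Finset.filter_subset _ _)
      have hfeq : X.filter (fun p => p.submodule ≤ gscKerW ℓ j₀) = X :=
        Finset.eq_of_subset_of_card_le (Finset.filter_subset _ _) (by omega)
      apply hncol
      refine ⟨gscKerW ℓ j₀, h2, fun p hp => ?_⟩
      rw [← hfeq] at hp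
      exact (Finset.mem_filter.mp hp).2
    · push_neg at hsame
      obtain ⟨j, hjT, k, hkT, hjk⟩ := hsame
      have hcvj : gscCvec (ℓ j) ≠ 0 := gscCvec_ne_zero (hhom j) (hne j)
      have hcvk : gscCvec (ℓ k) ≠ 0 := gscCvec_ne_zero (hhom k) (hne k)
      have hli : LinearIndependent K ![gscCvec (ℓ j), gscCvec (ℓ k)] :=
        gsc_li_of_ker_ne hcvj hcvk hjk
      obtain ⟨v, hvmem, hv0⟩ := exists_ne_zero_mem_inf (W := gscKerW ℓ j) (W' := gscKerW ℓ k)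
        (by rw [gsc_finrank_kerW ℓ hhom hne]) (by rw [gsc_finrank_kerW ℓ hhom hne])
      have hvj : MvPolynomial.eval v (ℓ j) = 0 := (gsc_mem_kerW ℓ hhom j v).mp hvmem.1
      have hvk : MvPolynomial.eval v (ℓ k) = 0 := (gsc_mem_kerW ℓ hhom k v).mp hvmem.2
      have hdotj : gscDot (gscCvec (ℓ j)) v = 0 := by
        rw [← eval_gscLin, ← hom1_eq_gscLin (hhom j)]; exact hvj
      have hdotk : gscDot (gscCvec (ℓ k)) v = 0 := by
        rw [← eval_gscLin, ← hom1_eq_gscLin (hhom k)]; exact hvk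
      have hljJ : ℓ j ∈ J := (Finset.mem_filter.mp hjT).2
      have hlkJ : ℓ k ∈ J := (Finset.mem_filter.mp hkT).2
      by_cases hall : ∀ i ∈ Tpr, MvPolynomial.eval v (ℓ i) = 0
      · -- all forms of `J` pass through the common point, which must be in `X`
        have hS : Tpr ⊆ Finset.univ.filter (fun i : Fin n => MvPolynomial.eval v (ℓ i) = 0) := by
          intro i hi
          rw [Finset.mem_filter]
          exact ⟨Finset.mem_univ _, hall i hi⟩
        have hexp : ∃ p ∈ X, p.submodule = Submodule.span K {v} := by
          by_contra hc
          push_neg at hc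
          have hup := gsc_upper ℓ hhom hne X hlines hv0 hc hvj hvk hjk
          have hcard := Finset.card_le_card hS
          omega
        obtain ⟨p, hpX, hpspan⟩ := hexp
        have hptJ : pointIdeal p ≤ J := by
          rw [pointIdeal, Ideal.span_le]
          rintro f ⟨hf1, hfv⟩
          have hrep : p.rep ∈ Submodule.span K {v} := by
            rw [← hpspan, Projectivization.submodule_eq]
            exact Submodule.mem_span_singleton_self _
          obtain ⟨a, ha⟩ := Submodule.mem_span_singleton.mp hrep
          have ha0 : a ≠ 0 := by
            rintro rfl
            exact p.rep_nonzero (by rw [← ha, zero_smul])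
          have hfv' : MvPolynomial.eval v f = 0 := by
            rw [hom1_eq_gscLin hf1, eval_gscLin]
            rw [hom1_eq_gscLin hf1, ← ha, eval_gscLin, map_smul, smul_eq_mul] at hfv
            exact (mul_eq_zero.mp hfv).resolve_left ha0
          obtain ⟨a', b', hab⟩ := gsc_hom1_decomp hv0 hli hdotj hdotk hf1 hfv'
          rw [SetLike.mem_coe, hab]
          apply Ideal.add_mem
          · apply Ideal.mul_mem_left
            rw [← hom1_eq_gscLin (hhom j)]
            exact hljJ
          · apply Ideal.mul_mem_left
            rw [← hom1_eq_gscLin (hhom k)]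
            exact hlkJ
        exact le_trans (iInf₂_le p hpX) hptJ
      · -- some form of `J` misses the common point: `J` contains all linear forms
        push_neg at hall
        obtain ⟨i, hiT, hiv⟩ := hall
        have hliJ : ℓ i ∈ J := (Finset.mem_filter.mp hiT).2
        have hdoti : gscDot (gscCvec (ℓ i)) v ≠ 0 := by
          rw [← eval_gscLin, ← hom1_eq_gscLin (hhom i)]; exact hiv
        have htri : LinearIndependent K ![gscCvec (ℓ i), gscCvec (ℓ j), gscCvec (ℓ k)] := by
          rw [show (![gscCvec (ℓ i), gscCvec (ℓ j), gscCvec (ℓ k)] : Fin 3 → Fin 3 → K)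
            = Fin.cons (gscCvec (ℓ i)) ![gscCvec (ℓ j), gscCvec (ℓ k)] from rfl,
            linearIndependent_fin_cons]
          refine ⟨hli, fun hmem => ?_⟩
          apply hdoti
          have hle : Submodule.span K (Set.range ![gscCvec (ℓ j), gscCvec (ℓ k)])
              ≤ LinearMap.ker (gscDot v) := by
            rw [gsc_range_pair, Submodule.span_le]
            rintro x (rfl | rfl) <;> rw [SetLike.mem_coe, LinearMap.mem_ker, gscDot_comm] <;>
              assumption
          have := hle hmem
          rw [LinearMap.mem_ker] at this
          rw [gscDot_comm]
          exact this
        have hsp : Submodule.span K (Set.range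
            ![gscCvec (ℓ i), gscCvec (ℓ j), gscCvec (ℓ k)]) = ⊤ := by
          apply Submodule.eq_top_of_finrank_eq
          rw [finrank_span_eq_card htri, Module.finrank_fin_fun]
          simp
        have hallhom : ∀ f : MvPolynomial (Fin 3) K, f.IsHomogeneous 1 → f ∈ J := by
          intro f hf
          have hmem : gscCvec f ∈ Submodule.span K (Set.range
              ![gscCvec (ℓ i), gscCvec (ℓ j), gscCvec (ℓ k)]) := by
            rw [hsp]; exact Submodule.mem_top
          rw [Submodule.mem_span_range_iff_exists_fun] at hmem
          obtain ⟨co, hco⟩ := hmem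
          rw [hom1_eq_gscLin hf, ← hco, gscLin_sum]
          apply Ideal.sum_mem
          intro t _
          rw [gscLin_smul]
          apply Ideal.mul_mem_left
          fin_cases t
          · have h : gscLin (gscCvec (ℓ i)) ∈ J := by
              rw [← hom1_eq_gscLin (hhom i)]; exact hliJ
            exact h
          · have h : gscLin (gscCvec (ℓ j)) ∈ J := by
              rw [← hom1_eq_gscLin (hhom j)]; exact hljJ
            exact h
          · have h : gscLin (gscCvec (ℓ k)) ∈ J := by
              rw [← hom1_eq_gscLin (hhom k)]; exact hlkJ
            exact h
        refine le_trans (iInf₂_le p₀ hp₀) ?_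
        rw [pointIdeal, Ideal.span_le]
        rintro f ⟨hf1, -⟩
        exact hallhom f hf1
end

section
/- Let R be a commutative ring with nonzero identity and let P be a finite subset of R. Let P_0, P_1, ..., P_r be subsets of P such that: (i) P_0 ∪ P_1 ∪ ··· ∪ P_r = P; (ii) P_0 has exactly one element; (iii) whenever p and p'' are two different elements of P_l for some 0 < l ≤ r, there is an integer l' with 0 ≤ l' < l and an element p' ∈ P_{l'} such that p' divides p·p''. For each p ∈ P fix an integer e(p) ≥ 1, and set q_l = Σ_{p ∈ P_l} p^{e(p)} for l = 0,...,r. Then the radical of the ideal generated by P equals the radical of the ideal ⟨q_0, q_1, ..., q_r⟩. -/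
open scoped Classical in
/-- **The Schmitt–Vogel lemma.** Let `R` be a commutative ring with nonzero identity
and `P` a finite subset of `R`.  Suppose `P₀, …, P_r` are subsets of `P` such that
(i) their union is `P`; (ii) `P₀` has exactly one element; (iii) for any two distinct
`p, p'' ∈ P_l` (`0 < l`) there are `l' < l` and `p' ∈ P_{l'}` with `p' ∣ p·p''`.
Then with `q_l = Σ_{p ∈ P_l} p^{e(p)}` (any exponents `e(p) ≥ 1`), one has
`√⟨P⟩ = √⟨q₀, …, q_r⟩`. -/
theorem schmitt_vogel_lemma (R : Type*) [CommRing R] [Nontrivial R]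
    (P : Finset R) (r : ℕ) (Ps : Fin (r + 1) → Finset R)
    (hsub : ∀ l, Ps l ⊆ P)
    (hunion : Finset.univ.biUnion Ps = P)
    (hP0 : (Ps 0).card = 1)
    (hdiv : ∀ l : Fin (r + 1), 0 < l.val →
      ∀ p ∈ Ps l, ∀ p'' ∈ Ps l, p ≠ p'' →
        ∃ l' : Fin (r + 1), l'.val < l.val ∧ ∃ p' ∈ Ps l', p' ∣ p * p'')
    (e : R → ℕ) (he : ∀ p ∈ P, 1 ≤ e p) :
    (Ideal.span (P : Set R)).radical
      = (Ideal.span (Set.range fun l : Fin (r + 1) => ∑ p ∈ Ps l, p ^ e p)).radical := by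
  set q : Fin (r + 1) → R := fun l => ∑ p ∈ Ps l, p ^ e p with hq
  set J := Ideal.span (Set.range q) with hJ
  have hqJ : ∀ l, q l ∈ J := fun l => Ideal.subset_span ⟨l, rfl⟩
  -- Key claim: every element of any `Ps l` lies in the radical of `J`.
  have key : ∀ n : ℕ, ∀ l : Fin (r + 1), l.val = n → ∀ p ∈ Ps l, p ∈ J.radical := by
    intro n
    induction n using Nat.strong_induction_on with
    | _ n ih =>
      intro l hl p hp
      rcases Nat.eq_zero_or_pos n with h0 | hpos
      · -- base case: l = 0
        have hl0 : l = 0 := Fin.ext (by simp [hl, h0])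
        subst hl0
        obtain ⟨p0, hP0'⟩ := Finset.card_eq_one.mp hP0
        rw [hP0'] at hp
        simp only [Finset.mem_singleton] at hp
        subst hp
        refine ⟨e p, ?_⟩
        have hq0 : q 0 = p ^ e p := by
          simp [hq, hP0']
        rw [← hq0]; exact hqJ 0
      · -- inductive step
        have hlt : (0 : ℕ) < l.val := hl ▸ hpos
        -- each cross term lies in the radical
        have hterm : ∀ p'' ∈ (Ps l).erase p, p * p'' ^ e p'' ∈ J.radical := by
          intro p'' hp''
          obtain ⟨hne, hp''l⟩ := Finset.mem_erase.mp hp''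
          obtain ⟨l', hl', p', hp', hdvd⟩ :=
            hdiv l hlt p hp p'' hp''l (fun h => hne h.symm)
          have hp'rad : p' ∈ J.radical := ih l'.val (by omega) l' rfl p' hp'
          have hdvd2 : p' ∣ p * p'' ^ e p'' := by
            refine hdvd.trans ?_
            obtain ⟨m, hm⟩ : ∃ m, e p'' = m + 1 :=
              ⟨e p'' - 1, by have := he p'' (hsub l hp''l); omega⟩
            exact ⟨p'' ^ m, by rw [hm]; ring⟩
          obtain ⟨c, hc⟩ := hdvd2
          rw [hc]
          exact Ideal.mul_mem_right _ _ hp'rad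
        have hsum : p * q l = p ^ (e p + 1) + ∑ p'' ∈ (Ps l).erase p, p * p'' ^ e p'' := by
          rw [hq]
          simp only []
          rw [Finset.mul_sum, ← Finset.add_sum_erase _ _ hp, pow_succ']
        have hpow : p ^ (e p + 1) ∈ J.radical := by
          have h1 : p * q l ∈ J.radical :=
            Ideal.mul_mem_left _ _ (Ideal.le_radical (hqJ l))
          have h2 : (∑ p'' ∈ (Ps l).erase p, p * p'' ^ e p'') ∈ J.radical :=
            Ideal.sum_mem _ (fun p'' hp'' => hterm p'' hp'')
          have h3 := Ideal.sub_mem _ h1 h2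
          rwa [hsum, add_sub_cancel_right] at h3
        exact Ideal.mem_radical_of_pow_mem hpow
  have hPrad : ∀ p ∈ P, p ∈ J.radical := by
    intro p hp
    rw [← hunion] at hp
    obtain ⟨l, _, hl⟩ := Finset.mem_biUnion.mp hp
    exact key l.val l rfl p hl
  apply le_antisymm
  · have h1 : Ideal.span (P : Set R) ≤ J.radical :=
      Ideal.span_le.mpr (fun x hx => hPrad x hx)
    calc (Ideal.span (P : Set R)).radical ≤ J.radical.radical := Ideal.radical_mono h1
      _ = J.radical := Ideal.radical_idem _
  · refine Ideal.radical_mono (Ideal.span_le.mpr ?_)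
    rintro _ ⟨l, rfl⟩
    refine Ideal.sum_mem _ (fun p hp => ?_)
    have hpP : p ∈ P := hsub l hp
    exact Ideal.pow_mem_of_mem _ (Ideal.subset_span hpP) _ (he p hpP)
end

section
/- Let K be a field, k ≥ 2, and let Λ = (ℓ_1,...,ℓ_n) be a list of (possibly repeated) linear forms in R = K[x_1,...,x_k] that generate the maximal ideal 𝔪 = ⟨x_1,...,x_k⟩. Then for every a ∈ {1,...,n}, the arithmetic rank of I_a(Λ) is at most n − a + 1; that is, there exist n − a + 1 elements f_1,...,f_{n−a+1} ∈ I_a(Λ) such that the radical of ⟨f_1,...,f_{n−a+1}⟩ equals the radical of I_a(Λ). -/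
open MvPolynomial

/-- Any product over a set of at least `a` indices lies in the ideal of `a`-fold products. -/
lemma prod_mem_span_of_card_le {R : Type*} [CommRing R] {n : ℕ} (ℓ : Fin n → R) (a : ℕ)
    (s : Finset (Fin n)) (hs : a ≤ s.card) :
    (∏ i ∈ s, ℓ i) ∈
      Ideal.span { f | ∃ t : Finset (Fin n), t.card = a ∧ f = ∏ i ∈ t, ℓ i } := by
  obtain ⟨t, hts, htc⟩ := Finset.exists_subset_card_eq hs
  have := Finset.prod_sdiff (f := ℓ) hts
  rw [← this]
  exact Ideal.mul_mem_left _ _ (Ideal.subset_span ⟨t, htc, rfl⟩)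

/-- **Bound on the arithmetic rank of a generalized star configuration scheme.**
If `Λ = (ℓ 1, …, ℓ n)` is a list of linear forms in `K[x_1,…,x_k]` generating the
maximal ideal `𝔪` and `1 ≤ a ≤ n`, then `ara(I_a(Λ)) ≤ n − a + 1`: there are
`n − a + 1` elements of `I_a(Λ)` generating it up to radical. -/
theorem ara_gscIdeal_le (K : Type*) [Field K] (k : ℕ) (hk : 2 ≤ k)
    (n : ℕ) (ℓ : Fin n → MvPolynomial (Fin k) K)
    (hhom : ∀ i, (ℓ i).IsHomogeneous 1)
    (hspan : Ideal.span (Set.range ℓ)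
      = Ideal.span (Set.range (X : Fin k → MvPolynomial (Fin k) K)))
    (a : ℕ) (ha1 : 1 ≤ a) (han : a ≤ n) :
    ∃ f : Fin (n - a + 1) → MvPolynomial (Fin k) K,
      (∀ i, f i ∈ gscIdeal ℓ a) ∧
      (Ideal.span (Set.range f)).radical = (gscIdeal ℓ a).radical := by
  classical
  set f : Fin (n - a + 1) → MvPolynomial (Fin k) K :=
    fun j => ∑ s ∈ Finset.powersetCard (a + j.val) Finset.univ, ∏ i ∈ s, ℓ i with hf
  have hmem : ∀ j, f j ∈ gscIdeal ℓ a := by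
    intro j
    apply Ideal.sum_mem
    intro s hs
    rw [Finset.mem_powersetCard] at hs
    exact prod_mem_span_of_card_le ℓ a s (by omega)
  refine ⟨f, hmem, le_antisymm (Ideal.radical_mono (Ideal.span_le.mpr ?_)) ?_⟩
  · rintro x ⟨j, rfl⟩; exact hmem j
  · have hle : gscIdeal ℓ a ≤ (Ideal.span (Set.range f)).radical := by
      rw [Ideal.radical_eq_sInf]
      refine le_sInf ?_
      rintro P ⟨hJP, hP⟩
      rw [gscIdeal, Ideal.span_le]
      rintro x ⟨s, hsc, rfl⟩
      -- the set of indices whose form is NOT in P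
      set T : Finset (Fin n) := Finset.univ.filter (fun i => ℓ i ∉ P) with hT
      have hTn : T.card ≤ n := by
        simpa using Finset.card_le_card (Finset.subset_univ T)
      have hTlt : T.card < a := by
        by_contra h
        push_neg at h
        -- the elementary symmetric function of degree `T.card` is in P
        have hfm : f ⟨T.card - a, by omega⟩ ∈ P :=
          hJP (Ideal.subset_span ⟨⟨T.card - a, by omega⟩, rfl⟩)
        have hcard : a + (T.card - a) = T.card := by omega
        rw [hf] at hfm
        simp only [hcard] at hfm
        have hTmem : T ∈ Finset.powersetCard T.card (Finset.univ : Finset (Fin n)) := by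
          rw [Finset.mem_powersetCard]
          exact ⟨Finset.subset_univ T, rfl⟩
        rw [← Finset.add_sum_erase _ _ hTmem] at hfm
        have hrest : (∑ s ∈ (Finset.powersetCard T.card (Finset.univ : Finset (Fin n))).erase T,
            ∏ i ∈ s, ℓ i) ∈ P := by
          apply Ideal.sum_mem
          intro t ht
          rw [Finset.mem_erase, Finset.mem_powersetCard] at ht
          obtain ⟨htT, _, htc⟩ := ht
          have : ¬ t ⊆ T := fun hsub =>
            htT (Finset.eq_of_subset_of_card_le hsub (by omega))
          obtain ⟨i, hit, hiT⟩ := Finset.not_subset.mp this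
          have hiP : ℓ i ∈ P := by
            by_contra hc
            exact hiT (Finset.mem_filter.mpr ⟨Finset.mem_univ i, hc⟩)
          rw [← Finset.mul_prod_erase _ _ hit]
          exact Ideal.mul_mem_right _ _ hiP
        have hprodT : (∏ i ∈ T, ℓ i) ∈ P := by
          have := Ideal.sub_mem P hfm hrest
          simpa using this
        rw [Ideal.IsPrime.prod_mem_iff] at hprodT
        obtain ⟨i, hiT, hiP⟩ := hprodT
        exact (Finset.mem_filter.mp hiT).2 hiP
      -- now `s` has `a > T.card` elements, so some index of `s` has its form in `P`
      have : ¬ s ⊆ T := fun hsub => by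
        have := Finset.card_le_card hsub; omega
      obtain ⟨i, his, hiT⟩ := Finset.not_subset.mp this
      have hiP : ℓ i ∈ P := by
        by_contra hc
        exact hiT (Finset.mem_filter.mpr ⟨Finset.mem_univ i, hc⟩)
      rw [← Finset.mul_prod_erase _ _ his]
      exact Ideal.mul_mem_right _ _ hiP
    calc (gscIdeal ℓ a).radical ≤ ((Ideal.span (Set.range f)).radical).radical :=
          Ideal.radical_mono hle
      _ = (Ideal.span (Set.range f)).radical := Ideal.radical_idem _
end

section
/- Let K be a field, k ≥ 2, and let Λ = (ℓ_1,...,ℓ_n) be a list of (possibly repeated) linear forms in R = K[x_1,...,x_k] that generate the maximal ideal 𝔪. Fix an integer j with 0 ≤ j ≤ n − 1 and define q_0 = ℓ_{j+1}·ℓ_{j+2}···ℓ_n, and for u = 1,...,j define q_u = Σ ℓ_{j−u+1}·∏_{i ∈ I} ℓ_i, the sum being over all subsets I ⊆ {j−u+2,...,n} with |I| = n − j − 1. Then each q_u lies in I_{n−j}(Λ) and the radical of I_{n−j}(Λ) equals the radical of ⟨q_0, q_1, ..., q_j⟩. -/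
open MvPolynomial

/-- The Schmitt–Vogel elements for `I_{n−j}(Λ)` (indices shifted down by one from the
paper's 1-based notation): `q 0 = ℓ_{j+1} ⋯ ℓ_n`, and for `u ≥ 1`,
`q u = Σ_{I ⊆ {j−u+2,…,n}, |I| = n−j−1} ℓ_{j−u+1} · ∏_{i ∈ I} ℓ_i`. -/
noncomputable def svQ {K : Type*} [Field K] {k n : ℕ} (ℓ : Fin n → MvPolynomial (Fin k) K)
    (j : ℕ) (hj : j < n) : ℕ → MvPolynomial (Fin k) K := fun u =>
  if u = 0 then
    ∏ i ∈ Finset.univ.filter (fun i : Fin n => j ≤ i.val), ℓ i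
  else
    ∑ s ∈ (Finset.univ.filter
        (fun i : Fin n => j - u + 1 ≤ i.val)).powersetCard (n - j - 1),
      ℓ ⟨j - u, by omega⟩ * ∏ i ∈ s, ℓ i

lemma card_filter_ge (n a : ℕ) :
    ((Finset.univ : Finset (Fin n)).filter (fun i => a ≤ i.val)).card = n - a := by
  rcases lt_or_ge a n with h | h
  · have he : ((Finset.univ : Finset (Fin n)).filter (fun i => a ≤ i.val))
        = Finset.Ici (⟨a, h⟩ : Fin n) := by
      ext i; simp [Fin.le_def]
    rw [he, Fin.card_Ici]
  · have he : ((Finset.univ : Finset (Fin n)).filter (fun i => a ≤ i.val)) = ∅ := by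
      ext i; simp; omega
    rw [he]; simp; omega

lemma svQ_key {K : Type*} [Field K] {k n : ℕ} (ℓ : Fin n → MvPolynomial (Fin k) K)
    (j : ℕ) (hj : j < n) :
    ∀ u, u ≤ j → ∀ s : Finset (Fin n), (∀ i ∈ s, j - u < i.val) → s.card = n - j - 1 →
      ℓ ⟨j - u, by omega⟩ * ∏ i ∈ s, ℓ i
        ∈ (Ideal.span (svQ ℓ j hj '' Set.Iic u)).radical := by
  intro u
  induction u using Nat.strong_induction_on with
  | _ u IH =>
  intro hu s hs hcard
  rcases Nat.eq_zero_or_pos u with rfl | hu0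
  · -- base case u = 0
    have hsub : s ⊆ Finset.univ.filter (fun i : Fin n => j + 1 ≤ i.val) := by
      intro i hi
      simp only [Finset.mem_filter, Finset.mem_univ, true_and]
      have := hs i hi; omega
    have hfc : (Finset.univ.filter (fun i : Fin n => j + 1 ≤ i.val)).card = n - j - 1 := by
      rw [card_filter_ge]; omega
    have hseq : s = Finset.univ.filter (fun i : Fin n => j + 1 ≤ i.val) :=
      Finset.eq_of_subset_of_card_le hsub (by omega)
    have hq0 : svQ ℓ j hj 0 = ℓ ⟨j - 0, by omega⟩ * ∏ i ∈ s, ℓ i := by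
      simp only [svQ, if_pos rfl]
      have hins : Finset.univ.filter (fun i : Fin n => j ≤ i.val)
          = insert ⟨j, hj⟩ (Finset.univ.filter (fun i : Fin n => j + 1 ≤ i.val)) := by
        ext i
        simp only [Finset.mem_filter, Finset.mem_univ, true_and, Finset.mem_insert,
          Fin.ext_iff]
        omega
      have hnm : (⟨j, hj⟩ : Fin n) ∉ Finset.univ.filter (fun i : Fin n => j + 1 ≤ i.val) := by
        simp
      rw [hins, Finset.prod_insert hnm, hseq, if_pos trivial]
      rfl
    rw [← hq0]
    exact Ideal.le_radical (Ideal.subset_span ⟨0, le_refl 0, rfl⟩)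
  · -- inductive step
    classical
    set a : Fin n := ⟨j - u, by omega⟩ with ha
    set F := Finset.univ.filter (fun i : Fin n => j - u + 1 ≤ i.val) with hF
    set P := F.powersetCard (n - j - 1) with hP
    have hsP : s ∈ P := Finset.mem_powersetCard.2
      ⟨fun i hi => by
        simp only [hF, Finset.mem_filter, Finset.mem_univ, true_and]
        have := hs i hi; omega, hcard⟩
    have hq : svQ ℓ j hj u = ∑ s' ∈ P, ℓ a * ∏ i ∈ s', ℓ i := by
      simp only [svQ, if_neg (by omega : ¬ u = 0)]
      rfl
    set p := ℓ a * ∏ i ∈ s, ℓ i with hp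
    set J := Ideal.span (svQ ℓ j hj '' Set.Iic u) with hJ
    have hsplit : p * p
        = p * svQ ℓ j hj u - ∑ s' ∈ P.erase s, p * (ℓ a * ∏ i ∈ s', ℓ i) := by
      rw [hq, Finset.mul_sum, ← Finset.add_sum_erase P _ hsP]
      ring
    have h1 : p * svQ ℓ j hj u ∈ J :=
      Ideal.mul_mem_left _ _ (Ideal.subset_span ⟨u, le_refl u, rfl⟩)
    have h2 : ∀ s' ∈ P.erase s, p * (ℓ a * ∏ i ∈ s', ℓ i) ∈ J.radical := by
      intro s' hs'
      obtain ⟨hne, hs'P⟩ := Finset.mem_erase.1 hs'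
      obtain ⟨hs'F, hcard'⟩ := Finset.mem_powersetCard.1 hs'P
      have hs'lb : ∀ i ∈ s', j - u + 1 ≤ i.val := by
        intro i hi
        have := hs'F hi
        simp only [hF, Finset.mem_filter, Finset.mem_univ, true_and] at this
        exact this
      have hune : (s ∪ s').Nonempty := by
        rw [Finset.nonempty_iff_ne_empty]
        intro h
        obtain ⟨h1', h2'⟩ := Finset.union_eq_empty.1 h
        exact hne (by rw [h1', h2'])
      set b := (s ∪ s').min' hune with hb
      have hbmem : b ∈ s ∪ s' := Finset.min'_mem _ _
      have hbLB : ∀ i ∈ s ∪ s', b ≤ i := fun i hi => Finset.min'_le _ _ hi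
      have hbge : j - u + 1 ≤ b.val := by
        rcases Finset.mem_union.1 hbmem with h | h
        · have := hs b h; omega
        · exact hs'lb b h
      have hcardU : n - j ≤ (s ∪ s').card := by
        have hss : s ⊂ s ∪ s' := by
          refine Finset.ssubset_iff_subset_ne.2 ⟨Finset.subset_union_left, ?_⟩
          intro h
          apply hne
          have hsub' : s' ⊆ s := by
            intro i hi
            have : i ∈ s ∪ s' := Finset.mem_union_right _ hi
            rwa [← h] at this
          exact Finset.eq_of_subset_of_card_le hsub' (by omega)
        have := Finset.card_lt_card hss; omega
      have hble : b.val ≤ j := by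
        by_contra hbj
        push_neg at hbj
        have hsubF : s ∪ s' ⊆ Finset.univ.filter (fun i : Fin n => j + 1 ≤ i.val) := by
          intro i hi
          simp only [Finset.mem_filter, Finset.mem_univ, true_and]
          have h1'' := hbLB i hi
          have : b.val ≤ i.val := h1''
          omega
        have := Finset.card_le_card hsubF
        rw [card_filter_ge] at this
        omega
      set u' := j - b.val with hu'
      have hu'lt : u' < u := by omega
      have hce : n - j - 1 ≤ ((s ∪ s').erase b).card := by
        rw [Finset.card_erase_of_mem hbmem]; omega
      obtain ⟨s'', hs''sub, hs''card⟩ := Finset.exists_subset_card_eq hce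
      have key := IH u' hu'lt (by omega) s''
        (fun i hi => by
          have hi' := hs''sub hi
          obtain ⟨hib, hiu⟩ := Finset.mem_erase.1 hi'
          have hble' : b ≤ i := hbLB i hiu
          have : b < i := lt_of_le_of_ne hble' (Ne.symm hib)
          have hlt' : b.val < i.val := this
          omega) hs''card
      have hfb : (⟨j - u', by omega⟩ : Fin n) = b := Fin.ext (by simp only [hu']; omega)
      rw [hfb] at key
      have hbns : b ∉ s'' := fun h => (Finset.mem_erase.1 (hs''sub h)).1 rfl
      have hdvd : ℓ b * ∏ i ∈ s'', ℓ i ∣ p * (ℓ a * ∏ i ∈ s', ℓ i) := by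
        have d1 : ℓ b * ∏ i ∈ s'', ℓ i = ∏ i ∈ insert b s'', ℓ i :=
          (Finset.prod_insert hbns).symm
        have d2 : ∏ i ∈ insert b s'', ℓ i ∣ ∏ i ∈ s ∪ s', ℓ i := by
          refine Finset.prod_dvd_prod_of_subset _ _ _ ?_
          intro i hi
          rcases Finset.mem_insert.1 hi with rfl | h
          · exact hbmem
          · exact Finset.mem_of_mem_erase (hs''sub h)
        have d3 : ∏ i ∈ s ∪ s', ℓ i ∣ (∏ i ∈ s, ℓ i) * ∏ i ∈ s', ℓ i :=
          ⟨∏ i ∈ s ∩ s', ℓ i, (Finset.prod_union_inter).symm⟩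
        have d4 : (∏ i ∈ s, ℓ i) * ∏ i ∈ s', ℓ i ∣ p * (ℓ a * ∏ i ∈ s', ℓ i) :=
          ⟨ℓ a * ℓ a, by rw [hp]; ring⟩
        rw [d1]
        exact d2.trans (d3.trans d4)
      obtain ⟨c, hc⟩ := hdvd
      rw [hc]
      have hmono : (Ideal.span (svQ ℓ j hj '' Set.Iic u')).radical ≤ J.radical :=
        Ideal.radical_mono (Ideal.span_mono (Set.image_mono (Set.Iic_subset_Iic.2 hu'lt.le)))
      exact Ideal.mul_mem_right _ _ (hmono key)
    have hpp : p * p ∈ J.radical := by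
      rw [hsplit]
      exact sub_mem (Ideal.le_radical h1) (Ideal.sum_mem _ h2)
    exact Ideal.mem_radical_of_pow_mem (m := 2) (by rwa [pow_two])

/-- **Explicit Schmitt–Vogel generators up to radical for `I_{n−j}(Λ)`.**
If `Λ = (ℓ 1, …, ℓ n)` is a list of linear forms generating the maximal ideal `𝔪` of
`K[x_1,…,x_k]` and `0 ≤ j ≤ n − 1`, then the `j + 1` elements `q 0, …, q j` defined
above lie in `I_{n−j}(Λ)` and generate it up to radical. -/
theorem gscIdeal_radical_eq_svQ_radical (K : Type*) [Field K] (k : ℕ) (hk : 2 ≤ k)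
    (n : ℕ) (ℓ : Fin n → MvPolynomial (Fin k) K)
    (hhom : ∀ i, (ℓ i).IsHomogeneous 1)
    (hspan : Ideal.span (Set.range ℓ)
      = Ideal.span (Set.range (X : Fin k → MvPolynomial (Fin k) K)))
    (j : ℕ) (hj : j < n) :
    (∀ u ≤ j, svQ ℓ j hj u ∈ gscIdeal ℓ (n - j)) ∧
    (gscIdeal ℓ (n - j)).radical
      = (Ideal.span (svQ ℓ j hj '' Set.Iic j)).radical := by
  classical
  have part1 : ∀ u ≤ j, svQ ℓ j hj u ∈ gscIdeal ℓ (n - j) := by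
    intro u hu
    rcases Nat.eq_zero_or_pos u with rfl | hu0
    · apply Ideal.subset_span
      refine ⟨Finset.univ.filter (fun i : Fin n => j ≤ i.val), ?_, ?_⟩
      · rw [card_filter_ge]
      · simp [svQ]
    · rw [show svQ ℓ j hj u = ∑ s ∈ (Finset.univ.filter
          (fun i : Fin n => j - u + 1 ≤ i.val)).powersetCard (n - j - 1),
          ℓ ⟨j - u, by omega⟩ * ∏ i ∈ s, ℓ i from by
            simp only [svQ, if_neg (by omega : ¬ u = 0)]]
      apply Ideal.sum_mem
      intro s hsP
      obtain ⟨hsF, hcard⟩ := Finset.mem_powersetCard.1 hsP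
      have hnot : (⟨j - u, by omega⟩ : Fin n) ∉ s := by
        intro h
        have := hsF h
        simp only [Finset.mem_filter, Finset.mem_univ, true_and] at this
        omega
      apply Ideal.subset_span
      refine ⟨insert ⟨j - u, by omega⟩ s, ?_, ?_⟩
      · rw [Finset.card_insert_of_notMem hnot, hcard]; omega
      · rw [Finset.prod_insert hnot]
  refine ⟨part1, le_antisymm ?_ ?_⟩
  · have hle : gscIdeal ℓ (n - j) ≤ (Ideal.span (svQ ℓ j hj '' Set.Iic j)).radical := by
      rw [gscIdeal, Ideal.span_le]
      rintro f ⟨s, hcard, rfl⟩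
      have hne : s.Nonempty := Finset.card_pos.1 (by omega)
      set b := s.min' hne with hb
      have hbmem := Finset.min'_mem s hne
      have hble : b.val ≤ j := by
        by_contra hbj
        push_neg at hbj
        have hsubF : s ⊆ Finset.univ.filter (fun i : Fin n => j + 1 ≤ i.val) := by
          intro i hi
          simp only [Finset.mem_filter, Finset.mem_univ, true_and]
          have hle' : b ≤ i := Finset.min'_le s i hi
          have : b.val ≤ i.val := hle'
          omega
        have := Finset.card_le_card hsubF
        rw [card_filter_ge] at this
        omega
      set u := j - b.val with hu
      have key := svQ_key ℓ j hj u (by omega) (s.erase b)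
        (fun i hi => by
          obtain ⟨hib, his⟩ := Finset.mem_erase.1 hi
          have hle' : b ≤ i := Finset.min'_le s i his
          have : b < i := lt_of_le_of_ne hle' (Ne.symm hib)
          have hlt' : b.val < i.val := this
          omega)
        (by rw [Finset.card_erase_of_mem hbmem, hcard])
      have hfb : (⟨j - u, by omega⟩ : Fin n) = b := Fin.ext (by simp only [hu]; omega)
      rw [hfb, Finset.mul_prod_erase s ℓ hbmem] at key
      have hmono : (Ideal.span (svQ ℓ j hj '' Set.Iic u)).radical
          ≤ (Ideal.span (svQ ℓ j hj '' Set.Iic j)).radical :=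
        Ideal.radical_mono (Ideal.span_mono (Set.image_mono (Set.Iic_subset_Iic.2 (by omega))))
      exact hmono key
    exact (Ideal.radical_mono hle).trans ((Ideal.radical_idem _).le)
  · have hle : Ideal.span (svQ ℓ j hj '' Set.Iic j) ≤ (gscIdeal ℓ (n - j)).radical := by
      rw [Ideal.span_le]
      rintro f ⟨u, hu, rfl⟩
      exact Ideal.le_radical (part1 u hu)
    exact (Ideal.radical_mono hle).trans ((Ideal.radical_idem _).le)
end

section
/- Let K be an infinite field, k ≥ 2, and let P_1,...,P_m ⊂ R = K[x_1,...,x_k] be the defining prime ideals of an essential subspace arrangement: each P_i is generated by c_i linearly independent linear forms (1 ≤ c_i ≤ k−1) and P_1 + ··· + P_m = 𝔪. Then the arithmetic rank of I = P_1 ∩ ··· ∩ P_m is at most 1 + Σ_{i=1}^m (c_i − 1); that is, setting ℵ = 1 + Σ_{i=1}^m (c_i − 1), there exist f_1,...,f_ℵ ∈ I with √⟨f_1,...,f_ℵ⟩ = I. -/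
lemma sv_core {R : Type*} [CommRing R] (I J : Ideal R) {r s : ℕ} (hr : 1 ≤ r) (hs : 1 ≤ s)
    (f : Fin r → R) (g : Fin s → R)
    (hf : I = Ideal.span (Set.range f)) (hg : J = Ideal.span (Set.range g)) :
    ∃ h : Fin (r + s - 1) → R, (∀ t, h t ∈ I ⊓ J) ∧
      (Ideal.span (Set.range h)).radical = (I ⊓ J).radical := by
  classical
  set h : Fin (r + s - 1) → R := fun t =>
    ∑ p ∈ Finset.univ.filter (fun p : Fin r × Fin s => (p.1 : ℕ) + (p.2 : ℕ) = (t : ℕ)),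
      f p.1 * g p.2 with hh
  have hfI : ∀ i, f i ∈ I := fun i => hf ▸ Ideal.subset_span ⟨i, rfl⟩
  have hgJ : ∀ j, g j ∈ J := fun j => hg ▸ Ideal.subset_span ⟨j, rfl⟩
  have hmem : ∀ t, h t ∈ I ⊓ J := by
    intro t
    refine Ideal.sum_mem _ fun p _ => ⟨Ideal.mul_mem_right _ _ (hfI p.1), Ideal.mul_mem_left _ _ (hgJ p.2)⟩
  refine ⟨h, hmem, le_antisymm (Ideal.radical_mono (Ideal.span_le.2 ?_)) ?_⟩
  · rintro x ⟨t, rfl⟩; exact hmem t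
  · rw [← Ideal.radical_idem (Ideal.span (Set.range h))]
    apply Ideal.radical_mono
    rw [Ideal.radical_eq_sInf]
    intro z hz
    rw [Submodule.mem_sInf]
    rintro p ⟨hsp, hp⟩
    -- claim: I ≤ p or J ≤ p
    by_cases hIp : I ≤ p
    · exact hIp hz.1
    by_cases hJp : J ≤ p
    · exact hJp hz.2
    exfalso
    have hA : ∃ i, f i ∉ p := by
      by_contra hA; push_neg at hA
      exact hIp (hf ▸ Ideal.span_le.2 (by rintro x ⟨i, rfl⟩; exact hA i))
    have hB : ∃ j, g j ∉ p := by
      by_contra hB; push_neg at hB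
      exact hJp (hg ▸ Ideal.span_le.2 (by rintro x ⟨j, rfl⟩; exact hB j))
    set A : Finset (Fin r) := Finset.univ.filter (fun i => f i ∉ p) with hAdef
    set B : Finset (Fin s) := Finset.univ.filter (fun j => g j ∉ p) with hBdef
    have hAne : A.Nonempty := hA.imp (fun i hi => by simp [hAdef, hi])
    have hBne : B.Nonempty := hB.imp (fun j hj => by simp [hBdef, hj])
    set i := A.max' hAne with hi
    set j := B.max' hBne with hj
    have hfi : f i ∉ p := by have := A.max'_mem hAne; simpa [hAdef] using this
    have hgj : g j ∉ p := by have := B.max'_mem hBne; simpa [hBdef] using this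
    have hiMax : ∀ i' : Fin r, i < i' → f i' ∈ p := by
      intro i' hlt
      by_contra hc
      exact absurd (A.le_max' i' (by simp [hAdef, hc])) (not_le.2 hlt)
    have hjMax : ∀ j' : Fin s, j < j' → g j' ∈ p := by
      intro j' hlt
      by_contra hc
      exact absurd (B.le_max' j' (by simp [hBdef, hc])) (not_le.2 hlt)
    have htlt : (i : ℕ) + (j : ℕ) < r + s - 1 := by omega
    set t : Fin (r + s - 1) := ⟨(i : ℕ) + (j : ℕ), htlt⟩ with ht
    have hht : h t ∈ p := hsp (Ideal.subset_span ⟨t, rfl⟩)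
    have hij_mem : (i, j) ∈ Finset.univ.filter
        (fun p : Fin r × Fin s => (p.1 : ℕ) + (p.2 : ℕ) = (t : ℕ)) := by simp [ht]
    have hsplit := Finset.add_sum_erase _ (fun p : Fin r × Fin s => f p.1 * g p.2) hij_mem
    have hrest : ∑ q ∈ (Finset.univ.filter
        (fun p : Fin r × Fin s => (p.1 : ℕ) + (p.2 : ℕ) = (t : ℕ))).erase (i, j),
        f q.1 * g q.2 ∈ p := by
      refine Ideal.sum_mem _ fun q hq => ?_
      rw [Finset.mem_erase, Finset.mem_filter] at hq
      obtain ⟨hne, -, hsum⟩ := hq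
      have hsum' : (q.1 : ℕ) + (q.2 : ℕ) = (i : ℕ) + (j : ℕ) := hsum
      rcases lt_trichotomy q.1 i with hlt | heq | hgt
      · have : j < q.2 := by
          have : (q.1 : ℕ) < (i : ℕ) := hlt
          have hj2 : (j : ℕ) < (q.2 : ℕ) := by omega
          exact hj2
        exact Ideal.mul_mem_left _ _ (hjMax _ this)
      · exfalso
        have : q.2 = j := by
          have : (q.2 : ℕ) = (j : ℕ) := by
            have h1 : (q.1 : ℕ) = (i : ℕ) := by rw [heq]
            omega
          exact Fin.ext this
        exact hne (Prod.ext heq this)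
      · exact Ideal.mul_mem_right _ _ (hiMax _ hgt)
    have : f i * g j ∈ p := by
      have : f i * g j = h t - ∑ q ∈ (Finset.univ.filter
          (fun p : Fin r × Fin s => (p.1 : ℕ) + (p.2 : ℕ) = (t : ℕ))).erase (i, j),
          f q.1 * g q.2 := by
        rw [hh]; dsimp only; rw [← hsplit]; ring
      rw [this]
      exact Ideal.sub_mem _ hht hrest
    rcases hp.mem_or_mem this with hmem | hmem
    · exact hfi hmem
    · exact hgj hmem

lemma sv_iInf_succ {R : Type*} [CommRing R] {m : ℕ} (P : Fin (m + 1) → Ideal R) :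
    (⨅ j, P j) = P 0 ⊓ ⨅ j : Fin m, P j.succ := by
  apply le_antisymm
  · exact le_inf (iInf_le _ 0) (le_iInf fun j => iInf_le _ j.succ)
  · refine le_iInf fun j => ?_
    rcases Fin.eq_zero_or_eq_succ j with rfl | ⟨j', rfl⟩
    · exact inf_le_left
    · exact inf_le_right.trans (iInf_le _ j')

lemma sv_induction {R : Type*} [CommRing R] :
    ∀ (m : ℕ), 1 ≤ m → ∀ (P : Fin m → Ideal R) (c : Fin m → ℕ),
    (∀ i, 1 ≤ c i) →
    (∀ i, ∃ v : Fin (c i) → R, P i = Ideal.span (Set.range v)) →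
    ∀ n, n = 1 + ∑ i, (c i - 1) →
    ∃ h : Fin n → R, (∀ t, h t ∈ ⨅ j, P j) ∧
      (Ideal.span (Set.range h)).radical = (⨅ j, P j).radical := by
  intro m
  induction m with
  | zero => omega
  | succ m ih =>
    intro _ P c hc hgen n hn
    obtain ⟨v, hv⟩ := hgen 0
    rcases Nat.eq_zero_or_pos m with rfl | hm
    · -- base case: one ideal
      have hn' : n = c 0 := by
        rw [hn, Fin.sum_univ_one]
        have := hc 0
        omega
      have hiInf : (⨅ j, P j) = P 0 :=
        le_antisymm (iInf_le _ 0)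
          (le_iInf fun j => by have : j = 0 := Fin.ext (by omega); rw [this])
      refine ⟨v ∘ (finCongr hn'), fun t => ?_, ?_⟩
      · rw [hiInf, hv]; exact Ideal.subset_span ⟨_, rfl⟩
      · rw [Set.range_comp, (finCongr hn').surjective.range_eq, Set.image_univ, ← hv, hiInf]
    · -- inductive step
      have hsum : ∑ i, (c i - 1) = (c 0 - 1) + ∑ i : Fin m, (c i.succ - 1) :=
        Fin.sum_univ_succ _
      obtain ⟨h', hmem', hrad'⟩ := ih hm (fun i => P i.succ) (fun i => c i.succ)
        (fun i => hc i.succ) (fun i => hgen i.succ) (1 + ∑ i : Fin m, (c i.succ - 1)) rfl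
      obtain ⟨h'', hmem'', hrad''⟩ := sv_core (P 0) (Ideal.span (Set.range h'))
        (hc 0) (by omega) v h' hv rfl
      have hsplit := sv_iInf_succ P
      have hspan_le : Ideal.span (Set.range h') ≤ ⨅ j : Fin m, P j.succ :=
        Ideal.span_le.2 (by rintro x ⟨t, rfl⟩; exact hmem' t)
      have hsz : c 0 + (1 + ∑ i : Fin m, (c i.succ - 1)) - 1 = n := by
        rw [hn, hsum]; have := hc 0; omega
      refine ⟨h'' ∘ (finCongr hsz.symm), fun t => ?_, ?_⟩
      · rw [hsplit]
        exact le_inf inf_le_left (inf_le_right.trans hspan_le) (hmem'' _)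
      · rw [Set.range_comp, (finCongr hsz.symm).surjective.range_eq, Set.image_univ,
          hrad'', hsplit, Ideal.radical_inf, Ideal.radical_inf, hrad']

lemma sv_radical_iInf_primes {R : Type*} [CommRing R] {m : ℕ} (P : Fin m → Ideal R)
    (hprime : ∀ i, (P i).IsPrime) : (⨅ j, P j).radical = ⨅ j, P j := by
  apply le_antisymm
  · refine le_iInf fun j => ?_
    calc (⨅ j, P j).radical ≤ (P j).radical := Ideal.radical_mono (iInf_le _ j)
    _ = P j := (hprime j).radical
  · exact Ideal.le_radical

open MvPolynomial

/-- **Arithmetic rank bound for subspace arrangements.** If `V = V₁ ∪ ⋯ ∪ V_m` is an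
essential projective subspace arrangement whose irreducible components have
codimensions `c₁, …, c_m` (so its radical defining ideal is `I = P₁ ∩ ⋯ ∩ P_m`, with
`P_i` generated by `c_i` linearly independent linear forms and `Σ P_i = 𝔪`), then
`ara(I) ≤ ℵ := 1 + Σᵢ (cᵢ − 1)`: there exist `f_1, …, f_ℵ ∈ I` with
`√⟨f_1,…,f_ℵ⟩ = I`. -/
theorem ara_subspaceArrangement_le (K : Type*) [Field K] [Infinite K]
    (k : ℕ) (hk : 2 ≤ k) (m : ℕ) (hm : 1 ≤ m)
    (P : Fin m → Ideal (MvPolynomial (Fin k) K))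
    (c : Fin m → ℕ) (hc : ∀ i, 1 ≤ c i ∧ c i ≤ k - 1)
    (hprime : ∀ i, (P i).IsPrime)
    (hgen : ∀ i, ∃ v : Fin (c i) → MvPolynomial (Fin k) K,
      (∀ j, (v j).IsHomogeneous 1) ∧ LinearIndependent K v ∧
      P i = Ideal.span (Set.range v))
    (hess : (⨆ i, P i) = Ideal.span (Set.range (X : Fin k → MvPolynomial (Fin k) K))) :
    ∃ f : Fin (1 + ∑ i, (c i - 1)) → MvPolynomial (Fin k) K,
      (∀ i, f i ∈ ⨅ j, P j) ∧
      (Ideal.span (Set.range f)).radical = ⨅ j, P j := by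
  obtain ⟨h, hmem, hrad⟩ := sv_induction m hm P c (fun i => (hc i).1)
    (fun i => (hgen i).imp fun v hv => hv.2.2) (1 + ∑ i, (c i - 1)) rfl
  exact ⟨h, hmem, by rw [hrad, sv_radical_iInf_primes P hprime]⟩
end

section
/- Let R = ℂ[x, y, z, w] and let I = ⟨x, z, w⟩ ∩ ⟨x, y⟩. There do not exist an integer n, a list Λ = (ℓ_1,...,ℓ_n) of linear forms in R generating the maximal ideal 𝔪 = ⟨x,y,z,w⟩, and an integer a with n − a + 1 = 3, such that the radical of I_a(Λ) equals I. -/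
open MvPolynomial

open scoped Classical in
/-- Evaluation of a degree-1 homogeneous polynomial is a linear combination of coordinates. -/
lemma eval_homog_one {f : MvPolynomial (Fin 4) ℂ} (hf : f.IsHomogeneous 1) (p : Fin 4 → ℂ) :
    eval p f = ∑ j, coeff (Finsupp.single j 1) f * p j := by
  have hmem : ∀ d ∈ f.support, ∃ j : Fin 4, d = Finsupp.single j 1 := by
    intro d hd
    have hdeg : (Finsupp.weight (1 : Fin 4 → ℕ)) d = 1 := hf (mem_support_iff.mp hd)
    have hsum : d 0 + d 1 + d 2 + d 3 = 1 := by
      have : (Finsupp.weight (1 : Fin 4 → ℕ)) d = ∑ j : Fin 4, d j := by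
        rw [Finsupp.weight_apply, Finsupp.sum_fintype]
        · simp
        · intro i; simp
      rw [this, Fin.sum_univ_four] at hdeg
      exact hdeg
    have hcases : (d 0 = 1 ∧ d 1 = 0 ∧ d 2 = 0 ∧ d 3 = 0) ∨
        (d 0 = 0 ∧ d 1 = 1 ∧ d 2 = 0 ∧ d 3 = 0) ∨
        (d 0 = 0 ∧ d 1 = 0 ∧ d 2 = 1 ∧ d 3 = 0) ∨
        (d 0 = 0 ∧ d 1 = 0 ∧ d 2 = 0 ∧ d 3 = 1) := by omega
    rcases hcases with h | h | h | h
    · exact ⟨0, Finsupp.ext fun a => by fin_cases a <;> simp [Finsupp.single_apply, h]⟩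
    · exact ⟨1, Finsupp.ext fun a => by fin_cases a <;> simp [Finsupp.single_apply, h]⟩
    · exact ⟨2, Finsupp.ext fun a => by fin_cases a <;> simp [Finsupp.single_apply, h]⟩
    · exact ⟨3, Finsupp.ext fun a => by fin_cases a <;> simp [Finsupp.single_apply, h]⟩
  have hsub : f.support ⊆ Finset.univ.image (fun j : Fin 4 => Finsupp.single j 1) := by
    intro d hd
    obtain ⟨j, rfl⟩ := hmem d hd
    exact Finset.mem_image.mpr ⟨j, Finset.mem_univ j, rfl⟩
  rw [eval_eq']
  rw [Finset.sum_subset hsub (by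
    intro d _ hd
    rw [MvPolynomial.notMem_support_iff.mp hd, zero_mul])]
  rw [Finset.sum_image (by
    intro a _ b _ h
    exact Finsupp.single_left_injective one_ne_zero h)]
  refine Finset.sum_congr rfl fun j _ => ?_
  congr 1
  have : ∀ i : Fin 4, p i ^ (Finsupp.single j 1) i = if j = i then p i else 1 := by
    intro i
    rw [Finsupp.single_apply]
    split <;> simp
  simp only [this]
  simp [Finset.prod_ite_eq]


open scoped Classical in
lemma core_contradiction {n : ℕ} (v : Fin n → Fin 4 → ℂ)
    (h2 : ∀ p : Fin 4 → ℂ, p 0 = 0 → (p 1 = 0 ∨ (p 2 = 0 ∧ p 3 = 0)) →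
      3 ≤ (Finset.univ.filter fun i => ∑ j, v i j * p j = 0).card)
    (h3 : ∀ p : Fin 4 → ℂ, 3 ≤ (Finset.univ.filter fun i => ∑ j, v i j * p j = 0).card →
      p 0 = 0 ∧ (p 1 = 0 ∨ (p 2 = 0 ∧ p 3 = 0))) : False := by
  classical
  -- notation: for a point given as a 4-tuple
  have hsum : ∀ (i : Fin n) (p : Fin 4 → ℂ),
      (∑ j, v i j * p j) = v i 0 * p 0 + v i 1 * p 1 + v i 2 * p 2 + v i 3 * p 3 := by
    intro i p; rw [Fin.sum_univ_four]
  set B : Finset (Fin n) := Finset.univ.filter (fun i => v i 1 = 0) with hBdef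
  have hB : 3 ≤ B.card := by
    have := h2 ![0, 1, 0, 0] (by simp) (by simp)
    refine le_trans this (Finset.card_le_card ?_)
    intro i hi
    rw [hBdef, Finset.mem_filter]
    refine ⟨Finset.mem_univ i, ?_⟩
    simp only [Finset.mem_filter, Finset.mem_univ, true_and, hsum] at hi
    simpa using hi
  set A : Finset (Fin n) := Finset.univ.filter (fun i => v i 2 = 0 ∧ v i 3 = 0) with hAdef
  have hA : 3 ≤ A.card := by
    obtain ⟨s, hs⟩ := Infinite.exists_notMem_finset
      (Finset.univ.image (fun i : Fin n => -(v i 3) / (v i 2)))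
    have := h2 ![0, 0, s, 1] (by simp) (by simp)
    refine le_trans this (Finset.card_le_card ?_)
    intro i hi
    rw [hAdef, Finset.mem_filter]
    refine ⟨Finset.mem_univ i, ?_⟩
    simp only [Finset.mem_filter, Finset.mem_univ, true_and, hsum] at hi
    simp only [Matrix.cons_val_zero, Matrix.cons_val_one, Matrix.head_cons,
      Matrix.cons_val_two, Matrix.tail_cons, Matrix.cons_val_three] at hi
    by_cases h2i : v i 2 = 0
    · constructor
      · exact h2i
      · rw [h2i] at hi; simpa using hi
    · exfalso
      apply hs
      refine Finset.mem_image.mpr ⟨i, Finset.mem_univ i, ?_⟩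
      field_simp
      linear_combination -hi
  -- a point not in V yields a contradiction if ≥ 3 forms vanish there
  have hbad : ∀ p : Fin 4 → ℂ, (p 0 ≠ 0 ∨ (p 1 ≠ 0 ∧ (p 2 ≠ 0 ∨ p 3 ≠ 0))) →
      ¬ (3 ≤ (Finset.univ.filter fun i => ∑ j, v i j * p j = 0).card) := by
    intro p hp hc
    obtain ⟨hp0, hp1⟩ := h3 p hc
    rcases hp with h | ⟨h1, h23⟩
    · exact h hp0
    · rcases hp1 with h | ⟨h2, h3'⟩
      · exact h1 h
      · rcases h23 with h | h
        · exact h h2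
        · exact h h3'
  -- there is i* in A with v i* 1 ≠ 0
  have hAy : ∃ i ∈ A, v i 1 ≠ 0 := by
    by_contra hno
    push_neg at hno
    apply hbad ![0, 1, 1, 0] (by simp)
    refine le_trans hA (Finset.card_le_card ?_)
    intro i hi
    have hi' := hi
    rw [hAdef, Finset.mem_filter] at hi'
    simp only [Finset.mem_filter, Finset.mem_univ, true_and, hsum]
    have := hno i hi
    simp [this, hi'.2.1]
  obtain ⟨istar, histar, hbeta⟩ := hAy
  have histar' : v istar 2 = 0 ∧ v istar 3 = 0 := by
    rw [hAdef, Finset.mem_filter] at histar; exact histar.2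
  -- there are j1 ≠ j2 in B with independent (z,w)-parts
  have hBpair : ∃ j1 ∈ B, ∃ j2 ∈ B, j1 ≠ j2 ∧ v j1 2 * v j2 3 ≠ v j2 2 * v j1 3 := by
    by_contra hno
    push_neg at hno
    have hpair : ∀ j1 ∈ B, ∀ j2 ∈ B, v j1 2 * v j2 3 = v j2 2 * v j1 3 := by
      intro j1 hj1 j2 hj2
      by_cases h : j1 = j2
      · subst h; ring
      · exact hno j1 hj1 j2 hj2 h
    by_cases hex : ∃ j0 ∈ B, v j0 2 ≠ 0 ∨ v j0 3 ≠ 0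
    · obtain ⟨j0, hj0, hj0ne⟩ := hex
      apply hbad ![0, 1, v j0 3, -(v j0 2)] (by simp; tauto)
      refine le_trans hB (Finset.card_le_card ?_)
      intro i hi
      have hi1 : v i 1 = 0 := by rw [hBdef, Finset.mem_filter] at hi; exact hi.2
      simp only [Finset.mem_filter, Finset.mem_univ, true_and, hsum]
      simp only [Matrix.cons_val_zero, Matrix.cons_val_one, Matrix.head_cons,
        Matrix.cons_val_two, Matrix.tail_cons, Matrix.cons_val_three]
      rw [hi1]
      linear_combination hpair i hi j0 hj0
    · push_neg at hex
      apply hbad ![0, 1, 1, 0] (by simp)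
      refine le_trans hB (Finset.card_le_card ?_)
      intro i hi
      have hi1 : v i 1 = 0 := by rw [hBdef, Finset.mem_filter] at hi; exact hi.2
      have := hex i hi
      simp only [Finset.mem_filter, Finset.mem_univ, true_and, hsum]
      simp [hi1, this.1]
  obtain ⟨j1, hj1, j2, hj2, hj12, hdet⟩ := hBpair
  have hj1y : v j1 1 = 0 := by rw [hBdef, Finset.mem_filter] at hj1; exact hj1.2
  have hj2y : v j2 1 = 0 := by rw [hBdef, Finset.mem_filter] at hj2; exact hj2.2
  set det : ℂ := v j1 2 * v j2 3 - v j2 2 * v j1 3 with hdetdef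
  have hdet0 : det ≠ 0 := sub_ne_zero.mpr hdet
  set q : Fin 4 → ℂ := ![1, -(v istar 0) / v istar 1,
    (v j2 0 * v j1 3 - v j1 0 * v j2 3) / det,
    (v j1 0 * v j2 2 - v j2 0 * v j1 2) / det] with hqdef
  apply hbad q (by left; simp [hqdef])
  have hsubset : ({istar, j1, j2} : Finset (Fin n)) ⊆
      Finset.univ.filter fun i => ∑ j, v i j * q j = 0 := by
    intro i hi
    simp only [Finset.mem_insert, Finset.mem_singleton] at hi
    simp only [Finset.mem_filter, Finset.mem_univ, true_and, hsum]
    simp only [hqdef, Matrix.cons_val_zero, Matrix.cons_val_one, Matrix.head_cons,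
      Matrix.cons_val_two, Matrix.tail_cons, Matrix.cons_val_three]
    rcases hi with rfl | rfl | rfl
    · rw [histar'.1, histar'.2]
      field_simp
      ring
    · rw [hj1y]
      field_simp
      ring
    · rw [hj2y]
      field_simp
      ring
  have hcard : ({istar, j1, j2} : Finset (Fin n)).card = 3 := by
    have h1 : istar ≠ j1 := fun h => hbeta (by rw [h]; exact hj1y)
    have h2 : istar ≠ j2 := fun h => hbeta (by rw [h]; exact hj2y)
    rw [Finset.card_insert_of_notMem (by simp [h1, h2]),
      Finset.card_insert_of_notMem (by simp [hj12]), Finset.card_singleton]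
  refine le_trans (le_of_eq hcard.symm) (Finset.card_le_card hsubset)

/-- **A subspace arrangement that cannot be interpolated with `n − a + 1 = 3`.**
In `R = ℂ[x, y, z, w]` (with `x = X 0`, `y = X 1`, `z = X 2`, `w = X 3`), there is no
list `Λ = (ℓ 1, …, ℓ n)` of linear forms generating the maximal ideal `𝔪` and no
`a ∈ {1, …, n}` with `n − a + 1 = 3` such that
`√(I_a(Λ)) = ⟨x, z, w⟩ ∩ ⟨x, y⟩`. -/
theorem no_gscv_interpolation_with_three :
    ¬ ∃ (n a : ℕ) (ℓ : Fin n → MvPolynomial (Fin 4) ℂ),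
      (∀ i, (ℓ i).IsHomogeneous 1) ∧
      Ideal.span (Set.range ℓ)
        = Ideal.span (Set.range (X : Fin 4 → MvPolynomial (Fin 4) ℂ)) ∧
      1 ≤ a ∧ a ≤ n ∧ n - a + 1 = 3 ∧
      (gscIdeal ℓ a).radical
        = Ideal.span {X 0, X 2, X 3} ⊓ Ideal.span {X 0, X 1} := by
  classical
  rintro ⟨n, a, ℓ, hhom, -, ha1, han, hna, hrad⟩
  have hn : n = a + 2 := by omega
  set v : Fin n → Fin 4 → ℂ := fun i j => coeff (Finsupp.single j 1) (ℓ i) with hv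
  have heval : ∀ (i : Fin n) (p : Fin 4 → ℂ), eval p (ℓ i) = ∑ j, v i j * p j :=
    fun i p => eval_homog_one (hhom i) p
  -- membership of key elements in the RHS ideal
  set I : Ideal (MvPolynomial (Fin 4) ℂ) :=
    Ideal.span {X 0, X 2, X 3} ⊓ Ideal.span {X 0, X 1} with hI
  have hXI : (X 0 : MvPolynomial (Fin 4) ℂ) ∈ I :=
    ⟨Ideal.subset_span (by simp), Ideal.subset_span (by simp)⟩
  have hYZ : (X 1 * X 2 : MvPolynomial (Fin 4) ℂ) ∈ I :=
    ⟨Ideal.mul_mem_left _ _ (Ideal.subset_span (by simp)),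
      Ideal.mul_mem_right _ _ (Ideal.subset_span (by simp))⟩
  have hYW : (X 1 * X 3 : MvPolynomial (Fin 4) ℂ) ∈ I :=
    ⟨Ideal.mul_mem_left _ _ (Ideal.subset_span (by simp)),
      Ideal.mul_mem_right _ _ (Ideal.subset_span (by simp))⟩
  apply core_contradiction v
  · -- h2
    intro p hp0 hp1
    -- the ideal I is contained in the kernel of evaluation at p
    have hIker : I ≤ RingHom.ker (eval p) := by
      rcases hp1 with h1 | ⟨h2, h3⟩
      · refine le_trans inf_le_right (Ideal.span_le.mpr ?_)
        rintro f hf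
        simp only [Set.mem_insert_iff, Set.mem_singleton_iff] at hf
        rcases hf with rfl | rfl <;> simp [RingHom.mem_ker, hp0, h1]
      · refine le_trans inf_le_left (Ideal.span_le.mpr ?_)
        rintro f hf
        simp only [Set.mem_insert_iff, Set.mem_singleton_iff] at hf
        rcases hf with rfl | rfl | rfl <;> simp [RingHom.mem_ker, hp0, h2, h3]
    have hker : gscIdeal ℓ a ≤ RingHom.ker (eval p) :=
      le_trans Ideal.le_radical (le_trans (le_of_eq hrad) hIker)
    by_contra hc
    push_neg at hc
    set N : Finset (Fin n) := Finset.univ.filter fun i => ∑ j, v i j * p j = 0 with hN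
    have hNcard : N.card ≤ 2 := by omega
    have hcompl : a ≤ Nᶜ.card := by
      rw [Finset.card_compl]
      simp only [Fintype.card_fin]
      omega
    obtain ⟨s, hsub, hscard⟩ := Finset.exists_subset_card_eq hcompl
    have hmem : (∏ i ∈ s, ℓ i) ∈ gscIdeal ℓ a :=
      Ideal.subset_span ⟨s, hscard, rfl⟩
    have := hker hmem
    rw [RingHom.mem_ker, map_prod] at this
    obtain ⟨i, hi, hi0⟩ := Finset.prod_eq_zero_iff.mp this
    have : i ∈ N := by
      rw [hN, Finset.mem_filter]
      exact ⟨Finset.mem_univ i, by rw [← heval]; exact hi0⟩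
    exact (Finset.mem_compl.mp (hsub hi)) this
  · -- h3
    intro p hp
    set N : Finset (Fin n) := Finset.univ.filter fun i => ∑ j, v i j * p j = 0 with hN
    have hker : gscIdeal ℓ a ≤ RingHom.ker (eval p) := by
      rw [gscIdeal, Ideal.span_le]
      rintro f ⟨s, hscard, rfl⟩
      have hNs : (N ∩ s).Nonempty := by
        rw [Finset.nonempty_iff_ne_empty]
        intro hdisj
        have hsubc : N ⊆ sᶜ := by
          intro i hi
          rw [Finset.mem_compl]
          intro his
          have : i ∈ N ∩ s := Finset.mem_inter.mpr ⟨hi, his⟩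
          rw [hdisj] at this
          exact absurd this (Finset.notMem_empty i)
        have := Finset.card_le_card hsubc
        rw [Finset.card_compl, hscard] at this
        simp only [Fintype.card_fin] at this
        omega
      obtain ⟨i, hi⟩ := hNs
      rw [Finset.mem_inter] at hi
      simp only [SetLike.mem_coe, RingHom.mem_ker, map_prod]
      apply Finset.prod_eq_zero hi.2
      have := hi.1
      rw [hN, Finset.mem_filter] at this
      rw [heval]
      exact this.2
    have hprime : (RingHom.ker (eval p : MvPolynomial (Fin 4) ℂ →+* ℂ)).IsPrime :=
      RingHom.ker_isPrime _
    have hIker : I ≤ RingHom.ker (eval p) := by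
      rw [← hrad]
      exact hprime.radical_le_iff.mpr hker
    have hp0 : p 0 = 0 := by
      have := hIker hXI
      rwa [RingHom.mem_ker, eval_X] at this
    have hp12 : p 1 * p 2 = 0 := by
      have := hIker hYZ
      rwa [RingHom.mem_ker, map_mul, eval_X, eval_X] at this
    have hp13 : p 1 * p 3 = 0 := by
      have := hIker hYW
      rwa [RingHom.mem_ker, map_mul, eval_X, eval_X] at this
    refine ⟨hp0, ?_⟩
    rcases mul_eq_zero.mp hp12 with h | h2
    · exact Or.inl h
    · rcases mul_eq_zero.mp hp13 with h | h3
      · exact Or.inl h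
      · exact Or.inr ⟨h2, h3⟩
end
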